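/- arXiv:1307.4142 — 3 statements merged into one kernel-verified Lean document; each statement's English description precedes it below -/
import Mathlib

section
/- Let R be a *-reducing ring with involution and let p, q ∈ R be projections. Then the following are equivalent: (1) p(1-q) is Moore–Penrose invertible; (2) p - q is Moore–Penrose invertible; (3) (1-p)q is Moore–Penrose invertible. -/
/-- `b` is a Moore–Penrose inverse of `a`. -/
def IsMPInv {R : Type*} [Ring R] [StarRing R] (a b : R) : Prop :=
  a * b * a = a ∧ b * a * b = b ∧ star (a * b) = a * b ∧ star (b * a) = b * a

/-- `a` is Moore–Penrose invertible. -/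
def IsMPInvertible {R : Type*} [Ring R] [StarRing R] (a : R) : Prop :=
  ∃ b, IsMPInv a b

/-- A projection: a self-adjoint idempotent. -/
def IsProjection {R : Type*} [Ring R] [StarRing R] (p : R) : Prop :=
  p * p = p ∧ star p = p

/-- A `*`-reducing ring: `a* a = 0` implies `a = 0`. -/
def IsStarReducing (R : Type*) [Ring R] [StarRing R] : Prop :=
  ∀ a : R, star a * a = 0 → a = 0

namespace MPAux
variable {R : Type*} [Ring R] [StarRing R]

theorem mp_star {a b : R} (h : IsMPInv a b) : IsMPInv (star a) (star b) := by
  obtain ⟨h1, h2, h3, h4⟩ := h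
  refine ⟨?_, ?_, ?_, ?_⟩
  · rw [← star_mul, ← star_mul, ← mul_assoc, h1]
  · rw [← star_mul, ← star_mul, ← mul_assoc, h2]
  · rw [← star_mul, star_star, h4]
  · rw [← star_mul, star_star, h3]

theorem mp_unique {a b c : R} (hb : IsMPInv a b) (hc : IsMPInv a c) : b = c := by
  obtain ⟨b1, b2, b3, b4⟩ := hb
  obtain ⟨c1, c2, c3, c4⟩ := hc
  have hab : a * b = a * c := by
    calc a * b = star (a * b) := b3.symm
      _ = star (a * c * a * b) := by rw [c1]
      _ = star ((a*c) * (a*b)) := by rw [mul_assoc]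
      _ = star (a*b) * star (a*c) := by rw [star_mul]
      _ = (a*b) * (a*c) := by rw [b3, c3]
      _ = a * b * a * c := by rw [mul_assoc (a*b)]
      _ = a * c := by rw [b1]
  have hba : b * a = c * a := by
    calc b * a = star (b * a) := b4.symm
      _ = star (b * (a * c * a)) := by rw [c1]
      _ = star ((b*a) * (c*a)) := by rw [show b * (a*c*a) = (b*a)*(c*a) by noncomm_ring]
      _ = star (c*a) * star (b*a) := by rw [star_mul]
      _ = (c*a) * (b*a) := by rw [b4, c4]
      _ = c * (a * b) * a := by noncomm_ring
      _ = c * (a * c) * a := by rw [hab]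
      _ = c * a := by rw [show c * (a*c) * a = c * (a*c*a) by noncomm_ring, c1]
  calc b = b * a * b := b2.symm
    _ = b * (a * c) := by rw [mul_assoc, hab]
    _ = (c * a) * c := by rw [← mul_assoc, hba]
    _ = c := by rw [c2]

theorem sa_dagger {h d : R} (hh : star h = h) (hmp : IsMPInv h d) : star d = d :=
  mp_unique (by simpa [hh] using mp_star hmp) hmp

theorem dagger_comm {h d : R} (hh : star h = h) (hmp : IsMPInv h d) : h * d = d * h := by
  have hd : star d = d := sa_dagger hh hmp
  calc h * d = star (h * d) := hmp.2.2.1.symm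
    _ = star d * star h := star_mul h d
    _ = d * h := by rw [hd, hh]

theorem mp_mul_star {a b : R} (h : IsMPInv a b) : IsMPInv (a * star a) (star b * b) := by
  obtain ⟨h1, h2, h3, h4⟩ := h
  have hsab : star a * star b = b * a := by rw [← star_mul, h4]
  have hsba : star b * star a = a * b := by rw [← star_mul, h3]
  have hk : a * star a * (star b * b) = a * b := by
    calc a * star a * (star b * b) = a * (star a * star b) * b := by noncomm_ring
      _ = a * (b * a) * b := by rw [hsab]
      _ = (a * b) * (a * b) := by noncomm_ring
      _ = (a * b * a) * b := by noncomm_ring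
      _ = a * b := by rw [h1]
  have hk' : (star b * b) * (a * star a) = a * b := by
    calc (star b * b) * (a * star a) = star b * star (b * a) * star a := by rw [h4]; noncomm_ring
      _ = star b * (star a * star b) * star a := by rw [star_mul]
      _ = (star b * star a) * (star b * star a) := by noncomm_ring
      _ = (a * b) * (a * b) := by rw [hsba]
      _ = (a * b * a) * b := by noncomm_ring
      _ = a * b := by rw [h1]
  refine ⟨?_, ?_, ?_, ?_⟩
  · rw [hk]
    calc a * b * (a * star a) = (a * b * a) * star a := by noncomm_ring
      _ = a * star a := by rw [h1]
  · rw [mul_assoc, hk]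
    calc star b * b * (a * b) = star b * (b * a * b) := by noncomm_ring
      _ = star b * b := by rw [h2]
  · rw [hk, h3]
  · rw [hk', h3]

theorem mp_of_mul_star (hR : IsStarReducing R) {a : R}
    (h : IsMPInvertible (a * star a)) : IsMPInvertible a := by
  obtain ⟨d, hd1, hd2, hd3, hd4⟩ := h
  set h' : R := a * star a with hh'
  have hh : star h' = h' := by rw [hh', star_mul, star_star]
  have hsd : star d = d := sa_dagger hh ⟨hd1, hd2, hd3, hd4⟩
  have key : h' * d * a = a := by
    have hx : (h' * d * a - a) * star (h' * d * a - a) = 0 := by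
      have hst : star (h' * d * a - a) = star a * (h' * d) - star a := by
        rw [star_sub, star_mul, hd3]
      rw [hst]
      have expand : (h' * d * a - a) * (star a * (h' * d) - star a)
          = (h'*d*(a*star a))*(h'*d) - h'*d*(a*star a) - (a*star a)*(h'*d) + (a*star a) := by
        noncomm_ring
      rw [expand, ← hh']
      have e1 : h'*d*h'*(h'*d) = h'*h'*d := by rw [hd1]; noncomm_ring
      have e2 : h'*d*h' = h' := hd1
      have e3 : h'*(h'*d) = h'*h'*d := by noncomm_ring
      rw [show h'*d*(a*star a)*(h'*d) = h'*d*h'*(h'*d) by rw [← hh'],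
        show h'*d*(a*star a) = h'*d*h' by rw [← hh'],
        show (a*star a)*(h'*d) = h'*(h'*d) by rw [← hh'], e1, e2, e3]
      abel
    have := hR (star (h' * d * a - a)) (by rwa [star_star])
    have : h' * d * a - a = 0 := by
      have := congrArg star this
      rwa [star_star, star_zero] at this
    exact sub_eq_zero.mp this
  refine ⟨star a * d, ?_, ?_, ?_, ?_⟩
  · calc a * (star a * d) * a = h' * d * a := by rw [hh']; noncomm_ring
      _ = a := key
  · calc star a * d * a * (star a * d) = star a * (d * h' * d) := by rw [hh']; noncomm_ring
      _ = star a * d := by rw [hd2]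
  · have : a * (star a * d) = h' * d := by rw [hh', mul_assoc]
    rw [this, hd3]
  · rw [star_mul, star_mul, hsd, star_star, mul_assoc]

theorem mp_invertible_star {a : R} (h : IsMPInvertible a) : IsMPInvertible (star a) := by
  obtain ⟨b, hb⟩ := h
  exact ⟨star b, mp_star hb⟩

theorem mp_of_star_mul (hR : IsStarReducing R) {a : R}
    (h : IsMPInvertible (star a * a)) : IsMPInvertible a := by
  have h' : IsMPInvertible (star a * star (star a)) := by rwa [star_star]
  have := mp_of_mul_star hR h'
  have := mp_invertible_star this
  rwa [star_star] at this

theorem commute_dagger {h d p : R} (hh : star h = h) (hmp : IsMPInv h d)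
    (hc : p * h = h * p) : p * d = d * p := by
  obtain ⟨h1, h2, h3, h4⟩ := hmp
  have hcd : h * d = d * h := dagger_comm hh ⟨h1, h2, h3, h4⟩
  obtain ⟨e, he'⟩ : ∃ e : R, e = h * d := ⟨_, rfl⟩
  have eh : e * h = h := by rw [he', h1]
  have he : h * e = h := by rw [he', hcd, ← mul_assoc, h1]
  have ed : e * d = d := by rw [he', hcd, mul_assoc, ← mul_assoc, h2]
  have ee : e * e = e := by rw [he', ← mul_assoc, h1]
  have hmul : ∀ x y : R, h * x = h * y → e * x = e * y := by
    intro x y hxy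
    rw [he', hcd, mul_assoc, mul_assoc, hxy]
  have hmulr : ∀ x y : R, x * h = y * h → x * e = y * e := by
    intro x y hxy
    rw [he', ← mul_assoc, ← mul_assoc, hxy]
  have A : e * (p * e) = e * (e * p) := by
    apply hmul
    calc h * (p * e) = (h * p) * e := by rw [mul_assoc]
      _ = (p * h) * e := by rw [hc]
      _ = p * (h * e) := by rw [mul_assoc]
      _ = p * h := by rw [he]
      _ = h * p := hc
      _ = (h * e) * p := by rw [he]
      _ = h * (e * p) := by rw [mul_assoc]
  have A' : e * p * e = e * p := by
    rw [mul_assoc, A, ← mul_assoc, ee]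
  have B : (p * e) * e = (e * p) * e := by
    apply hmulr
    calc (p * e) * h = p * (e * h) := by rw [mul_assoc]
      _ = p * h := by rw [eh]
      _ = h * p := hc
      _ = (e * h) * p := by rw [eh]
      _ = e * (h * p) := by rw [mul_assoc]
      _ = e * (p * h) := by rw [hc]
      _ = (e * p) * h := by rw [mul_assoc]
  have pe_comm : p * e = e * p := by
    have : p * (e * e) = e * p := by rw [← mul_assoc, B, A']
    rwa [ee] at this
  have C : e * (p * d) = e * (d * p) := by
    apply hmul
    calc h * (p * d) = (h * p) * d := by rw [mul_assoc]
      _ = (p * h) * d := by rw [hc]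
      _ = p * (h * d) := by rw [mul_assoc]
      _ = p * e := by rw [he']
      _ = e * p := pe_comm
      _ = (h * d) * p := by rw [he']
      _ = h * (d * p) := by rw [mul_assoc]
  calc p * d = p * (e * d) := by rw [ed]
    _ = (p * e) * d := by rw [mul_assoc]
    _ = (e * p) * d := by rw [pe_comm]
    _ = e * (p * d) := by rw [mul_assoc]
    _ = e * (d * p) := C
    _ = (e * d) * p := by rw [mul_assoc]
    _ = d * p := by rw [ed]

theorem mp_corner {h d p : R} (hpp : p * p = p) (hsp : star p = p) (hh : star h = h)
    (hc : p * h = h * p) (hmp : IsMPInv h d) : IsMPInv (p * h) (p * d) := by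
  have hcd : h * d = d * h := dagger_comm hh hmp
  have hpd : p * d = d * p := commute_dagger hh hmp hc
  obtain ⟨h1, h2, h3, h4⟩ := hmp
  have hep : h * d * p = p * (h * d) := by
    rw [mul_assoc, ← hpd, ← mul_assoc, ← hc, mul_assoc]
  have hep' : d * h * p = p * (d * h) := by
    rw [← hcd]; exact hep
  have k1 : (p * h) * (p * d) = p * (h * d) := by
    calc (p * h) * (p * d) = p * (h * p) * d := by noncomm_ring
      _ = p * (p * h) * d := by rw [hc]
      _ = (p * p) * (h * d) := by noncomm_ring
      _ = p * (h * d) := by rw [hpp]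
  have k2 : (p * d) * (p * h) = p * (h * d) := by
    calc (p * d) * (p * h) = p * (d * p) * h := by noncomm_ring
      _ = p * (p * d) * h := by rw [← hpd]
      _ = (p * p) * (d * h) := by noncomm_ring
      _ = p * (d * h) := by rw [hpp]
      _ = p * (h * d) := by rw [hcd]
  refine ⟨?_, ?_, ?_, ?_⟩
  · calc (p * h) * (p * d) * (p * h) = (p * (h * d)) * (p * h) := by rw [k1]
      _ = p * ((h * d) * p) * h := by noncomm_ring
      _ = p * (p * (h * d)) * h := by rw [show (h*d)*p = p*(h*d) from hep]
      _ = (p * p) * (h * d * h) := by noncomm_ring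
      _ = p * h := by rw [hpp, h1]
  · calc (p * d) * (p * h) * (p * d) = (p * (h * d)) * (p * d) := by rw [k2]
      _ = p * ((d * h) * p) * d := by rw [hcd]; noncomm_ring
      _ = p * (p * (d * h)) * d := by rw [show (d*h)*p = p*(d*h) from hep']
      _ = (p * p) * (d * h * d) := by noncomm_ring
      _ = p * d := by rw [hpp, h2]
  · rw [k1, star_mul, h3, hsp, hep]
  · rw [k2, star_mul, h3, hsp, hep]

theorem lift_eq {a b c : R} (h : a * b = c) : ∀ x : R, a * (b * x) = c * x :=
  fun x => by rw [← mul_assoc, h]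

theorem key_trick (hR : IsStarReducing R) {p q : R} (hp : IsProjection p) (hq : IsProjection q)
    (h : IsMPInvertible (p - p * q * p)) : IsMPInvertible (q - q * p * q) := by
  obtain ⟨pp, sp⟩ := hp
  obtain ⟨qq, sq⟩ := hq
  have pp' := lift_eq pp
  have qq' := lift_eq qq
  obtain ⟨r, hr_def⟩ : ∃ r : R, r = p - p * q * p := ⟨_, rfl⟩
  obtain ⟨c, hc⟩ := h
  rw [← hr_def] at hc
  obtain ⟨hc1, hc2, hc3, hc4⟩ := hc
  have hr_sa : star r = r := by
    rw [hr_def, star_sub, sp, star_mul, star_mul, sp, sq, mul_assoc]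
  have csa : star c = c := sa_dagger hr_sa ⟨hc1, hc2, hc3, hc4⟩
  have hcr : r * c = c * r := dagger_comm hr_sa ⟨hc1, hc2, hc3, hc4⟩
  have pr : p * r = r := by
    rw [hr_def, mul_sub, mul_assoc p q p, pp', pp]
  have rp : r * p = r := by
    rw [hr_def, sub_mul, pp, mul_assoc (p*q) p p, pp]
  have pr' := lift_eq pr
  have rp' := lift_eq rp
  obtain ⟨e, he_def⟩ : ∃ e : R, e = r * c := ⟨_, rfl⟩
  have he2 : e = c * r := by rw [he_def, hcr]
  have ec : e * c = c := by rw [he2, hc2]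
  have ce : c * e = c := by rw [he_def, ← mul_assoc, hc2]
  have re : r * e = r := by rw [he2, ← mul_assoc, hc1]
  have er : e * r = r := by rw [he_def, hc1]
  have ee : e * e = e := by rw [he_def, ← mul_assoc, hc1]
  have pe : p * e = e := by rw [he_def, ← mul_assoc, pr]
  have ep : e * p = e := by rw [he2, mul_assoc, rp]
  have pc : p * c = c := by rw [← ec, ← mul_assoc, pe]
  have cp : c * p = c := by rw [← ce, mul_assoc, ep]
  have se : star e = e := by rw [he_def]; exact hc3
  obtain ⟨z, hz_def⟩ : ∃ z : R, z = p - e := ⟨_, rfl⟩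
  have zz : z * z = z := by
    rw [hz_def, sub_mul, mul_sub, mul_sub, pp, pe, ep, ee]; abel
  have sz : star z = z := by rw [hz_def, star_sub, sp, se]
  have pz : p * z = z := by rw [hz_def, mul_sub, pp, pe]
  have zp : z * p = z := by rw [hz_def, sub_mul, pp, ep]
  have rz : r * z = 0 := by rw [hz_def, mul_sub, rp, re, sub_self]
  have z_pqz : z = p * q * z := by
    have h0 : p * z - p * q * p * z = 0 := by
      have : (p - p * q * p) * z = 0 := by rw [← hr_def, rz]
      rwa [sub_mul] at this
    have h1 : z = p * q * p * z := by
      rw [pz] at h0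
      exact (sub_eq_zero.mp h0)
    have h2 : p * q * p * z = p * q * z := by rw [mul_assoc (p*q) p z, pz]
    rw [← h2]; exact h1
  have z_zqp : z = z * q * p := by
    have h0 := congrArg star z_pqz
    rw [sz, star_mul, star_mul, sz, sq, sp, ← mul_assoc] at h0
    exact h0
  have zqz : z * q * z = z := by
    calc z * q * z = z * q * (p * z) := by rw [pz]
      _ = (z * q * p) * z := by rw [← mul_assoc]
      _ = z * z := by rw [← z_zqp]
      _ = z := zz
  have qz : q * z = z := by
    have h0 : star (z - q * z) * (z - q * z) = 0 := by
      rw [star_sub, sz, star_mul, sq, sz]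
      have t1 : z * (q * z) = z := by rw [← mul_assoc, zqz]
      have t2 : z * q * (q * z) = z := by rw [mul_assoc, qq', ← mul_assoc, zqz]
      have expand : (z - z * q) * (z - q * z)
          = z * z - z * (q * z) - z * q * z + z * q * (q * z) := by noncomm_ring
      rw [expand, zz, t1, t2, zqz]
      abel
    have h1 := hR _ h0
    exact (sub_eq_zero.mp h1).symm
  have zq : z * q = z := by
    have h0 := congrArg star qz
    rwa [star_mul, sz, sq] at h0
  obtain ⟨s, hs_def⟩ : ∃ s : R, s = q - q * p * q := ⟨_, rfl⟩
  obtain ⟨d, hd_def⟩ : ∃ d : R, d = q + q * c * q - z := ⟨_, rfl⟩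
  have s_sa : star s = s := by
    rw [hs_def, star_sub, sq, star_mul, star_mul, sq, sp, mul_assoc]
  have d_sa : star d = d := by
    rw [hd_def, star_sub, star_add, sq, sz, star_mul, star_mul, sq, csa, mul_assoc]
  have qs : q * s = s := by
    rw [hs_def, mul_sub, mul_assoc q p q, qq', qq]
  have sq2 : s * q = s := by
    rw [hs_def, sub_mul, qq, mul_assoc (q*p) q q, qq]
  have pqc : p * q * c = c - e := by
    have h0 : r * c = e := he_def.symm
    rw [hr_def, sub_mul, pc, mul_assoc (p*q) p c, pc] at h0
    rw [← h0]; abel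
  have sc : s * c = q * p - z := by
    have h3 : q * p * q * c = q * (c - e) := by
      rw [mul_assoc (q*p) q c, mul_assoc q p (q*c), ← mul_assoc p q c, pqc]
    have h4 : s * c = q * e := by
      rw [hs_def, sub_mul, h3, mul_sub]; abel
    have h5 : q * e = q * p - z := by
      rw [show e = p - z from by rw [hz_def]; abel, mul_sub, qz]
    rw [h4, h5]
  have zc : z * c = 0 := by rw [hz_def, sub_mul, pc, ec, sub_self]
  have sz0 : s * z = 0 := by
    have h6 : q * p * q * z = z := by
      rw [mul_assoc (q*p) q z, qz, mul_assoc q p z, pz, qz]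
    rw [hs_def, sub_mul, qz, h6, sub_self]
  have zs0 : z * s = 0 := by
    have h0 := congrArg star sz0
    rwa [star_mul, sz, s_sa, star_zero] at h0
  have sd : s * d = q - z := by
    have h7 : s * (q * c * q) = q * p * q - z := by
      rw [mul_assoc q c q, ← mul_assoc s q (c*q), sq2, ← mul_assoc s c q, sc, sub_mul, zq]
    rw [hd_def, mul_sub, mul_add, sq2, h7, sz0, hs_def]
    abel
  have ds : d * s = q - z := by
    have h0 := congrArg star sd
    rwa [star_mul, s_sa, d_sa, star_sub, sq, sz] at h0
  have qd : q * d = d := by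
    have h8 : q * (q * c * q) = q * c * q := by
      rw [mul_assoc q c q, qq', ← mul_assoc]
    rw [hd_def, mul_sub, mul_add, qq, h8, qz]
  have zd : z * d = 0 := by
    have h9 : z * (q * c * q) = 0 := by
      rw [mul_assoc q c q, ← mul_assoc z q (c*q), zq, ← mul_assoc z c q, zc, zero_mul]
    rw [hd_def, mul_sub, mul_add, zq, h9, zz, add_zero, sub_self]
  rw [← hs_def]
  refine ⟨d, ?_, ?_, ?_, ?_⟩
  · rw [sd, sub_mul, qs, zs0, sub_zero]
  · rw [ds, sub_mul, qd, zd, sub_zero]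
  · rw [sd, star_sub, sq, sz]
  · rw [ds, star_sub, sq, sz]

theorem mp_orth {f g bf bg : R} (hf : IsMPInv f bf) (hg : IsMPInv g bg)
    (h1 : f * star g = 0) (h2 : star f * g = 0) : IsMPInv (f - g) (bf - bg) := by
  have gsf : g * star f = 0 := by
    have := congrArg star h1
    rwa [star_mul, star_star, star_zero] at this
  have sgf : star g * f = 0 := by
    have := congrArg star h2
    rwa [star_mul, star_star, star_zero] at this
  have hbf1 : bf * f = star f * star bf := by rw [← star_mul, hf.2.2.2]
  have hbf2 : f * bf = star bf * star f := by rw [← star_mul, hf.2.2.1]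
  have hbg1 : bg * g = star g * star bg := by rw [← star_mul, hg.2.2.2]
  have hbg2 : g * bg = star bg * star g := by rw [← star_mul, hg.2.2.1]
  have bf_eq : bf = star f * (star bf * bf) := by
    conv_lhs => rw [← hf.2.1]
    rw [hbf1, mul_assoc]
  have bf_eq2 : bf = bf * star bf * star f := by
    conv_lhs => rw [← hf.2.1]
    rw [mul_assoc, hbf2, ← mul_assoc]
  have bg_eq : bg = star g * (star bg * bg) := by
    conv_lhs => rw [← hg.2.1]
    rw [hbg1, mul_assoc]
  have bg_eq2 : bg = bg * star bg * star g := by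
    conv_lhs => rw [← hg.2.1]
    rw [mul_assoc, hbg2, ← mul_assoc]
  have g_bf : g * bf = 0 := by
    rw [bf_eq, ← mul_assoc, gsf, zero_mul]
  have f_bg : f * bg = 0 := by
    rw [bg_eq, ← mul_assoc, h1, zero_mul]
  have bf_g : bf * g = 0 := by
    rw [bf_eq2, mul_assoc, h2, mul_zero]
  have bg_f : bg * f = 0 := by
    rw [bg_eq2, mul_assoc, sgf, mul_zero]
  have prod1 : (f - g) * (bf - bg) = f * bf + g * bg := by
    have expand : (f - g) * (bf - bg) = f * bf - f * bg - g * bf + g * bg := by noncomm_ring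
    rw [expand, f_bg, g_bf]; abel
  have prod2 : (bf - bg) * (f - g) = bf * f + bg * g := by
    have expand : (bf - bg) * (f - g) = bf * f - bf * g - bg * f + bg * g := by noncomm_ring
    rw [expand, bf_g, bg_f]; abel
  refine ⟨?_, ?_, ?_, ?_⟩
  · rw [prod1]
    have expand : (f * bf + g * bg) * (f - g)
        = f * bf * f - f * (bf * g) + g * (bg * f) - g * bg * g := by noncomm_ring
    rw [expand, hf.1, hg.1, bf_g, bg_f, mul_zero, mul_zero]; abel
  · rw [prod2]
    have expand : (bf * f + bg * g) * (bf - bg)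
        = bf * f * bf - bf * (f * bg) + bg * (g * bf) - bg * g * bg := by noncomm_ring
    rw [expand, hf.2.1, hg.2.1, f_bg, g_bf, mul_zero, mul_zero]; abel
  · rw [prod1, star_add, hf.2.2.1, hg.2.2.1]
  · rw [prod2, star_add, hf.2.2.2, hg.2.2.2]

theorem one_sub_proj {p : R} (hp : IsProjection p) : IsProjection (1 - p) := by
  obtain ⟨pp, sp⟩ := hp
  constructor
  · have : (1 - p) * (1 - p) = 1 - p - p + p * p := by noncomm_ring
    rw [this, pp]; abel
  · rw [star_sub, star_one, sp]

theorem one_to_three (hR : IsStarReducing R) {p q : R} (hp : IsProjection p)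
    (hq : IsProjection q) (h : IsMPInvertible (p * (1 - q))) :
    IsMPInvertible ((1 - p) * q) := by
  obtain ⟨pp, sp⟩ := hp
  obtain ⟨qq, sq⟩ := hq
  obtain ⟨b, hb⟩ := h
  have hffs : (p * (1 - q)) * star (p * (1 - q)) = p - p * q * p := by
    rw [star_mul, star_sub, star_one, sq, sp]
    have expand : p * (1 - q) * ((1 - q) * p)
        = p * p - p * q * p - p * q * p + p * (q * q) * p := by noncomm_ring
    rw [expand, pp, qq]; abel
  have h1 : IsMPInvertible (p - p * q * p) := by
    have := mp_mul_star hb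
    rw [hffs] at this
    exact ⟨_, this⟩
  have h2 : IsMPInvertible (q - q * p * q) := key_trick hR ⟨pp, sp⟩ ⟨qq, sq⟩ h1
  have hgsg : star ((1 - p) * q) * ((1 - p) * q) = q - q * p * q := by
    rw [star_mul, star_sub, star_one, sp, sq]
    have expand : q * (1 - p) * ((1 - p) * q)
        = q * q - q * p * q - q * p * q + q * (p * p) * q := by noncomm_ring
    rw [expand, pp, qq]; abel
  apply mp_of_star_mul hR
  rwa [hgsg]

theorem two_to_one (hR : IsStarReducing R) {p q : R} (hp : IsProjection p)
    (hq : IsProjection q) (h : IsMPInvertible (p - q)) :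
    IsMPInvertible (p * (1 - q)) := by
  obtain ⟨pp, sp⟩ := hp
  obtain ⟨qq, sq⟩ := hq
  obtain ⟨b, hb⟩ := h
  have hsa : star (p - q) = p - q := by rw [star_sub, sp, sq]
  have haa := mp_mul_star hb
  rw [hsa] at haa
  have hh_sa : star ((p - q) * (p - q)) = (p - q) * (p - q) := by
    rw [star_mul, hsa]
  have hcomm : p * ((p - q) * (p - q)) = ((p - q) * (p - q)) * p := by
    have e1 : p * ((p - q) * (p - q)) = p * p - p * q - p * (q * p) + p * (q * q) := by
      have : p * ((p - q) * (p - q)) = p * (p * p) - p * (p * q) - p * (q * p) + p * (q * q) := by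
        noncomm_ring
      rw [this, pp, ← mul_assoc, pp]
    have e2 : ((p - q) * (p - q)) * p = p * p - p * (q * p) - q * p + (q * q) * p := by
      have : ((p - q) * (p - q)) * p = p * (p * p) - p * (q * p) - q * (p * p) + (q * q) * p := by
        noncomm_ring
      rw [this, pp, pp]
    rw [e1, e2, qq, ← mul_assoc, pp]
    abel
  have hcorner := mp_corner pp sp hh_sa hcomm haa
  have pp' := lift_eq pp
  have qq' := lift_eq qq
  have hid : p * ((p - q) * (p - q)) = (p * (1 - q)) * star (p * (1 - q)) := by
    rw [star_mul, star_sub, star_one, sq, sp]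
    have e1 : p * ((p - q) * (p - q)) = p * (p * p) - p * (p * q) - p * (q * p) + p * (q * q) := by
      noncomm_ring
    have e2 : p * (1 - q) * ((1 - q) * p)
        = p * p - p * (q * p) - p * (q * p) + p * (q * (q * p)) := by noncomm_ring
    rw [e1, e2]
    simp only [pp', qq', pp, qq]
    abel
  apply mp_of_mul_star hR
  rw [← hid]
  exact ⟨_, hcorner⟩

theorem onethree_to_two {p q : R} (hp : IsProjection p) (hq : IsProjection q)
    (h1 : IsMPInvertible (p * (1 - q))) (h3 : IsMPInvertible ((1 - p) * q)) :
    IsMPInvertible (p - q) := by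
  obtain ⟨pp, sp⟩ := hp
  obtain ⟨qq, sq⟩ := hq
  obtain ⟨bf, hbf⟩ := h1
  obtain ⟨bg, hbg⟩ := h3
  have o1 : (p * (1 - q)) * star ((1 - p) * q) = 0 := by
    rw [star_mul, star_sub, star_one, sp, sq]
    have expand : p * (1 - q) * (q * (1 - p))
        = p * (q * (1 - p)) - p * (q * (q * (1 - p))) := by noncomm_ring
    rw [expand, ← mul_assoc q q, qq]
    abel
  have o2 : star (p * (1 - q)) * ((1 - p) * q) = 0 := by
    rw [star_mul, star_sub, star_one, sp, sq]
    have expand : (1 - q) * p * ((1 - p) * q)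
        = (1 - q) * (p * q) - (1 - q) * (p * (p * q)) := by noncomm_ring
    rw [expand, ← mul_assoc p p, pp]
    abel
  have := mp_orth hbf hbg o1 o2
  have hid : p * (1 - q) - (1 - p) * q = p - q := by noncomm_ring
  rw [hid] at this
  exact ⟨_, this⟩

end MPAux

theorem stmt_11 {R : Type*} [Ring R] [StarRing R] (hR : IsStarReducing R) (p q : R)
    (hp : IsProjection p) (hq : IsProjection q) :
    List.TFAE
      [IsMPInvertible (p * (1 - q)),
       IsMPInvertible (p - q),
       IsMPInvertible ((1 - p) * q)] := by
  tfae_have 1 → 3 := MPAux.one_to_three hR hp hq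
  tfae_have 3 → 1 := by
    intro h
    have h2 := MPAux.one_to_three hR (MPAux.one_sub_proj hp) (MPAux.one_sub_proj hq)
    rw [sub_sub_cancel, sub_sub_cancel] at h2
    exact h2 h
  tfae_have 2 → 1 := MPAux.two_to_one hR hp hq
  tfae_have 1 → 2 := fun h =>
    MPAux.onethree_to_two hp hq h (MPAux.one_to_three hR hp hq h)
  tfae_finish
end

section
/- Let R be a *-reducing ring with involution and let p, q ∈ R be projections such that p - q is Moore–Penrose invertible (so that, equivalently, 1-pq, p(1-q)p, 1-qp, p(1-q) and (1-q)p are all MP invertible). Then, writing q̄ = 1-q, the following six elements are equal: (1-pq)^†·pq̄p, pq̄·(pq̄p)^†, pq̄p·(1-qp)^†, p·(pq̄)^†, (q̄p)^†·p, and p·(p-q)^†·p. -/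
section Aux

variable {R : Type*} [Ring R] [StarRing R]

lemma mp_star {a b : R} (h : IsMPInv a b) : IsMPInv (star a) (star b) := by
  obtain ⟨h1, h2, h3, h4⟩ := h
  refine ⟨?_, ?_, ?_, ?_⟩
  · have : star a * star b * star a = star (a * b * a) := by simp [star_mul, mul_assoc]
    rw [this, h1]
  · have : star b * star a * star b = star (b * a * b) := by simp [star_mul, mul_assoc]
    rw [this, h2]
  · rw [show star a * star b = star (b * a) from (star_mul b a).symm, star_star]
    exact h4.symm
  · rw [show star b * star a = star (a * b) from (star_mul a b).symm, star_star]
    exact h3.symm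

lemma mp_unique {a b c : R} (hb : IsMPInv a b) (hc : IsMPInv a c) : b = c := by
  obtain ⟨b1, b2, b3, b4⟩ := hb
  obtain ⟨c1, c2, c3, c4⟩ := hc
  have e1 : (a * c) * (a * b) = a * b := by rw [← mul_assoc, c1]
  have e2 : (a * b) * (a * c) = a * c := by rw [← mul_assoc, b1]
  have hab : a * b = a * c := by
    calc a * b = star (a * b) := b3.symm
      _ = star ((a * c) * (a * b)) := by rw [e1]
      _ = star (a * b) * star (a * c) := by rw [star_mul]
      _ = (a * b) * (a * c) := by rw [b3, c3]
      _ = a * c := e2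
  have e3 : (b * a) * (c * a) = b * a := by
    rw [mul_assoc, ← mul_assoc a c a, c1]
  have e4 : (c * a) * (b * a) = c * a := by
    rw [mul_assoc, ← mul_assoc a b a, b1]
  have hba : b * a = c * a := by
    calc b * a = star (b * a) := b4.symm
      _ = star ((b * a) * (c * a)) := by rw [e3]
      _ = star (c * a) * star (b * a) := by rw [star_mul]
      _ = (c * a) * (b * a) := by rw [b4, c4]
      _ = c * a := e4
  calc b = b * a * b := b2.symm
    _ = c * a * b := by rw [hba]
    _ = c * (a * b) := mul_assoc _ _ _
    _ = c * (a * c) := by rw [hab]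
    _ = c * a * c := (mul_assoc _ _ _).symm
    _ = c := c2

lemma mp_comm {a b c : R} (h : IsMPInv a b) (hc1 : c * a = a * c)
    (hc2 : c * star a = star a * c) : c * b = b * c := by
  obtain ⟨h1, h2, h3, h4⟩ := h
  -- absorption facts
  have d1 : star a * (a * b) = star a := by
    calc star a * (a * b) = star a * star (a * b) := by rw [h3]
      _ = star ((a * b) * a) := by rw [← star_mul]
      _ = star a := by rw [show (a*b)*a = a from h1]
  have d2 : (b * a) * star a = star a := by
    calc (b * a) * star a = star (b * a) * star a := by rw [h4]
      _ = star (a * (b * a)) := by rw [← star_mul]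
      _ = star a := by rw [show a*(b*a) = a from by rw [← mul_assoc]; exact h1]
  have hE1idem : (a * b) * (a * b) = a * b := by rw [← mul_assoc, h1]
  have hE2idem : (b * a) * (b * a) = b * a := by rw [← mul_assoc, h2]
  -- E1 = a*b commutes with c
  have e5 : ((a*b)*c)*a = a*c := by rw [mul_assoc, hc1, ← mul_assoc, h1]
  have e6 : (c*(a*b))*a = a*c := by rw [mul_assoc, show (a*b)*a = a from h1, hc1]
  have hsa1 : star a * ((a*b)*c) = star a * c := by rw [← mul_assoc, d1]
  have hsa2 : star a * (c*(a*b)) = star a * c := by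
    rw [← mul_assoc, ← hc2, mul_assoc, d1, hc2]
  have hu1 : star a * ((a*b)*c - c*(a*b)) = 0 := by
    rw [mul_sub, hsa1, hsa2, sub_self]
  have habY : ∀ Y : R, (a*b)*Y = star b * (star a * Y) := by
    intro Y; rw [← mul_assoc, ← star_mul, h3]
  have hE1u : (a*b) * ((a*b)*c - c*(a*b)) = 0 := by rw [habY, hu1, mul_zero]
  have hu2 : ((a*b)*c - c*(a*b)) * a = 0 := by rw [sub_mul, e5, e6, sub_self]
  have huE1 : ((a*b)*c - c*(a*b)) * (a*b) = 0 := by rw [← mul_assoc, hu2, zero_mul]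
  have r1 : (a*b)*c = (a*b)*(c*(a*b)) := by
    have := hE1u
    rw [mul_sub, sub_eq_zero, ← mul_assoc, hE1idem] at this
    exact this
  have r2 : ((a*b)*c)*(a*b) = c*(a*b) := by
    have := huE1
    rw [sub_mul, sub_eq_zero, mul_assoc c, hE1idem] at this
    exact this
  have commE1 : (a*b)*c = c*(a*b) := by
    rw [r1, ← mul_assoc, r2]
  -- E2 = b*a commutes with c
  have f5 : a*((b*a)*c) = a*c := by
    rw [← mul_assoc, show a*(b*a) = a from by rw [← mul_assoc]; exact h1]
  have f6 : a*(c*(b*a)) = a*c := by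
    rw [← mul_assoc, ← hc1, mul_assoc, show a*(b*a) = a from by rw [← mul_assoc]; exact h1, hc1]
  have hv1 : a * ((b*a)*c - c*(b*a)) = 0 := by rw [mul_sub, f5, f6, sub_self]
  have hE2v : (b*a) * ((b*a)*c - c*(b*a)) = 0 := by rw [mul_assoc, hv1, mul_zero]
  have f7 : ((b*a)*c)*star a = star a * c := by rw [mul_assoc, hc2, ← mul_assoc, d2]
  have f8 : (c*(b*a))*star a = star a * c := by rw [mul_assoc, d2, hc2]
  have hv2 : ((b*a)*c - c*(b*a)) * star a = 0 := by rw [sub_mul, f7, f8, sub_self]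
  have hbaY : ∀ Y : R, Y * (b*a) = (Y * star a) * star b := by
    intro Y; rw [mul_assoc, ← star_mul, h4]
  have hvE2 : ((b*a)*c - c*(b*a)) * (b*a) = 0 := by rw [hbaY, hv2, zero_mul]
  have s1 : (b*a)*c = (b*a)*(c*(b*a)) := by
    have := hE2v
    rw [mul_sub, sub_eq_zero, ← mul_assoc, hE2idem] at this
    exact this
  have s2 : ((b*a)*c)*(b*a) = c*(b*a) := by
    have := hvE2
    rw [sub_mul, sub_eq_zero, mul_assoc c, hE2idem] at this
    exact this
  have commE2 : (b*a)*c = c*(b*a) := by rw [s1, ← mul_assoc, s2]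
  -- conclude
  calc c * b = c * ((b*a)*b) := by rw [show (b*a)*b = b from h2]
    _ = (c*(b*a))*b := by rw [← mul_assoc]
    _ = ((b*a)*c)*b := by rw [commE2]
    _ = ((b*(a*c)))*b := by rw [mul_assoc b a c]
    _ = ((b*(c*a)))*b := by rw [hc1]
    _ = ((b*c)*a)*b := by rw [← mul_assoc]
    _ = (b*c)*(a*b) := by rw [mul_assoc]
    _ = (b*c)*(star (a*b)) := by rw [h3]
    _ = b * (c * (a*b)) := by rw [h3, mul_assoc]
    _ = b * ((a*b)*c) := by rw [commE1]
    _ = (b*(a*b))*c := by rw [← mul_assoc]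
    _ = (b*a*b)*c := by rw [← mul_assoc]
    _ = b * c := by rw [h2]

end Aux

theorem stmt_12 {R : Type*} [Ring R] [StarRing R] (hR : IsStarReducing R)
    (p q x₁ x₂ x₃ x₄ x₅ x₆ : R)
    (hp : IsProjection p) (hq : IsProjection q)
    (h₁ : IsMPInv (1 - p * q) x₁)
    (h₂ : IsMPInv (p * (1 - q) * p) x₂)
    (h₃ : IsMPInv (1 - q * p) x₃)
    (h₄ : IsMPInv (p * (1 - q)) x₄)
    (h₅ : IsMPInv ((1 - q) * p) x₅)
    (h₆ : IsMPInv (p - q) x₆) :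
    x₁ * (p * (1 - q) * p) = p * (1 - q) * x₂ ∧
    p * (1 - q) * x₂ = p * (1 - q) * p * x₃ ∧
    p * (1 - q) * p * x₃ = p * x₄ ∧
    p * x₄ = x₅ * p ∧
    x₅ * p = p * x₆ * p := by
  obtain ⟨hpp, hps⟩ := hp
  obtain ⟨hqq, hqs⟩ := hq
  have hpp' : ∀ x : R, p * (p * x) = p * x := fun x => by rw [← mul_assoc, hpp]
  have hqq' : ∀ x : R, q * (q * x) = q * x := fun x => by rw [← mul_assoc, hqq]
  -- star facts
  have sA : star (1 - p * q) = 1 - q * p := by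
    simp [star_sub, star_mul, hps, hqs]
  have sB : star (p * (1 - q) * p) = p * (1 - q) * p := by
    simp [star_mul, star_sub, star_one, hps, hqs, mul_assoc]
  have sD : star (p * (1 - q)) = (1 - q) * p := by
    simp [star_mul, star_sub, star_one, hps, hqs]
  have sM : star (p - q) = p - q := by simp [star_sub, hps, hqs]
  -- algebra identities  (pure p,q computations)
  have a1 : (1 - p) * (1 - p * q) = 1 - p := by
    simp only [mul_sub, sub_mul, mul_one, one_mul, mul_assoc, hpp, hqq, hpp', hqq']
    try abel
  have a2 : (1 - p * q) * p = p * (1 - q) * p := by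
    simp only [mul_sub, sub_mul, mul_one, one_mul, mul_assoc, hpp, hqq, hpp', hqq']
    try abel
  have a3 : p * (1 - q * p) = p * (1 - q) * p := by
    simp only [mul_sub, sub_mul, mul_one, one_mul, mul_assoc, hpp, hqq, hpp', hqq']
    try abel
  have a5 : (p - p * q * p + p * q) * (1 - p * q) = p * (1 - q) * p := by
    simp only [mul_sub, sub_mul, add_mul, mul_one, one_mul, mul_assoc, hpp, hqq, hpp', hqq']
    try abel
  have a6 : (p - p * q * p + p * q) * (p * (1 - q) * p) = p * (1 - q) * p := by
    simp only [mul_sub, sub_mul, add_mul, mul_one, one_mul, mul_assoc, hpp, hqq, hpp', hqq']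
    try abel
  have a7 : (p * (1 - q)) * ((1 - q) * p) = p * (1 - q) * p := by
    simp only [mul_sub, sub_mul, mul_one, one_mul, mul_assoc, hpp, hqq, hpp', hqq']
    try abel
  have hpB : p * (p * (1 - q) * p) = p * (1 - q) * p := by
    simp only [mul_sub, sub_mul, mul_one, one_mul, mul_assoc, hpp, hqq, hpp', hqq']
  have hBp : (p * (1 - q) * p) * p = p * (1 - q) * p := by
    simp only [mul_sub, sub_mul, mul_one, one_mul, mul_assoc, hpp, hqq, hpp', hqq']
  have a8 : p * (p - q) * p = p * (1 - q) * p := by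
    simp only [mul_sub, sub_mul, mul_one, one_mul, mul_assoc, hpp, hqq, hpp', hqq']
    try abel
  have aB2 : ((p - q) * (p - q)) * p = p * (1 - q) * p := by
    simp only [mul_sub, sub_mul, mul_one, one_mul, mul_assoc, hpp, hqq, hpp', hqq']
    try abel
  have aN : p * ((p - q) * (p - q)) = ((p - q) * (p - q)) * p := by
    simp only [mul_sub, sub_mul, mul_one, one_mul, mul_assoc, hpp, hqq, hpp', hqq']
    try abel
  have hp0 : (1 - p) * p = 0 := by rw [sub_mul, one_mul, hpp, sub_self]
  have hp0' : p * (1 - p) = 0 := by rw [mul_sub, mul_one, hpp, sub_self]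
  -- uniqueness / self-adjointness facts
  have hx₂s : star x₂ = x₂ := by
    refine mp_unique ?_ h₂
    have := mp_star h₂; rwa [sB] at this
  have hfs : p * (1 - q) * p * x₂ = x₂ * (p * (1 - q) * p) := by
    calc p * (1 - q) * p * x₂ = star (p * (1 - q) * p * x₂) := h₂.2.2.1.symm
      _ = star x₂ * star (p * (1 - q) * p) := by rw [star_mul]
      _ = x₂ * (p * (1 - q) * p) := by rw [hx₂s, sB]
  have hpx₂ : p * x₂ = x₂ := by
    have w1 : x₂ = (p * (1 - q) * p) * (x₂ * x₂) := by
      calc x₂ = x₂ * (p * (1 - q) * p) * x₂ := h₂.2.1.symm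
        _ = (x₂ * (p * (1 - q) * p)) * x₂ := rfl
        _ = (p * (1 - q) * p * x₂) * x₂ := by rw [hfs]
        _ = (p * (1 - q) * p) * (x₂ * x₂) := mul_assoc _ _ _
    calc p * x₂ = p * ((p * (1 - q) * p) * (x₂ * x₂)) := by rw [← w1]
      _ = (p * (p * (1 - q) * p)) * (x₂ * x₂) := (mul_assoc _ _ _).symm
      _ = (p * (1 - q) * p) * (x₂ * x₂) := by rw [hpB]
      _ = x₂ := w1.symm
  have hx₂p : x₂ * p = x₂ := by
    have w2 : x₂ = (x₂ * x₂) * (p * (1 - q) * p) := by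
      calc x₂ = x₂ * (p * (1 - q) * p) * x₂ := h₂.2.1.symm
        _ = x₂ * (p * (1 - q) * p * x₂) := mul_assoc _ _ _
        _ = x₂ * (x₂ * (p * (1 - q) * p)) := by rw [hfs]
        _ = (x₂ * x₂) * (p * (1 - q) * p) := (mul_assoc _ _ _).symm
    calc x₂ * p = ((x₂ * x₂) * (p * (1 - q) * p)) * p := by rw [← w2]
      _ = (x₂ * x₂) * ((p * (1 - q) * p) * p) := mul_assoc _ _ _
      _ = (x₂ * x₂) * (p * (1 - q) * p) := by rw [hBp]
      _ = x₂ := w2.symm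
  ---------------------------------------------------------------- L1
  have y1 : star (1 - p * q) * ((1 - p * q) * x₁) = star (1 - p * q) := by
    rw [← h₁.2.2.1, ← star_mul]
    exact congrArg star h₁.1
  have a3' : p * star (1 - p * q) = p * (1 - q) * p := by rw [sA]; exact a3
  have y2 : (p * (1 - q) * p) * ((1 - p * q) * x₁) = p * (1 - q) * p := by
    rw [← a3', mul_assoc, y1, a3']
  have y3 : ((1 - p * q) * x₁) * (p * (1 - q) * p) = p * (1 - q) * p := by
    have := congrArg star y2
    rwa [star_mul, h₁.2.2.1, sB] at this
  have y4 : (p * (1 - q) * p) * x₁ * (p * (1 - q) * p) = p * (1 - q) * p := by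
    calc (p * (1 - q) * p) * x₁ * (p * (1 - q) * p)
        = ((p - p * q * p + p * q) * (1 - p * q)) * x₁ * (p * (1 - q) * p) := by rw [a5]
      _ = (p - p * q * p + p * q) * (((1 - p * q) * x₁) * (p * (1 - q) * p)) := by
          simp only [mul_assoc]
      _ = (p - p * q * p + p * q) * (p * (1 - q) * p) := by rw [y3]
      _ = p * (1 - q) * p := a6
  have y5 : (1 - p) * (x₁ * (1 - p * q)) = 1 - p := by
    calc (1 - p) * (x₁ * (1 - p * q))
        = ((1 - p) * (1 - p * q)) * (x₁ * (1 - p * q)) := by rw [a1]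
      _ = (1 - p) * ((1 - p * q) * (x₁ * (1 - p * q))) := by simp only [mul_assoc]
      _ = (1 - p) * (1 - p * q) := by
          rw [show (1 - p * q) * (x₁ * (1 - p * q)) = 1 - p * q from by
            rw [← mul_assoc]; exact h₁.1]
      _ = 1 - p := a1
  have y6a : x₁ * (p * (1 - q) * p) = (x₁ * (1 - p * q)) * p := by
    rw [← a2, ← mul_assoc]
  have y6b : (1 - p) * ((x₁ * (1 - p * q)) * p) = 0 := by
    rw [← mul_assoc, y5, hp0]
  have y6 : (x₁ * (1 - p * q)) * p = p * ((x₁ * (1 - p * q)) * p) := by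
    have := y6b
    rw [sub_mul, one_mul, sub_eq_zero] at this
    exact this
  have y5' : (x₁ * (1 - p * q)) * (1 - p) = 1 - p := by
    have := congrArg star y5
    rwa [star_mul, h₁.2.2.2, star_sub, star_one, hps] at this
  have y8a : (p * (x₁ * (1 - p * q))) * (1 - p) = 0 := by
    rw [mul_assoc, y5', hp0']
  have y8 : p * (x₁ * (1 - p * q)) = (p * (x₁ * (1 - p * q))) * p := by
    have := y8a
    rw [mul_sub, mul_one, sub_eq_zero] at this
    exact this
  have st : star ((x₁ * (1 - p * q)) * p) = (x₁ * (1 - p * q)) * p := by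
    calc star ((x₁ * (1 - p * q)) * p) = star p * star (x₁ * (1 - p * q)) := by rw [star_mul]
      _ = p * (x₁ * (1 - p * q)) := by rw [hps, h₁.2.2.2]
      _ = (p * (x₁ * (1 - p * q))) * p := y8
      _ = p * ((x₁ * (1 - p * q)) * p) := mul_assoc _ _ _
      _ = (x₁ * (1 - p * q)) * p := y6.symm
  have y9 : (x₁ * (p * (1 - q) * p)) * (x₂ * (p * (1 - q) * p)) = x₁ * (p * (1 - q) * p) := by
    calc (x₁ * (p * (1 - q) * p)) * (x₂ * (p * (1 - q) * p))
        = x₁ * ((p * (1 - q) * p) * x₂ * (p * (1 - q) * p)) := by simp only [mul_assoc]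
      _ = x₁ * (p * (1 - q) * p) := by rw [h₂.1]
  have y10 : (x₂ * (p * (1 - q) * p)) * (x₁ * (p * (1 - q) * p)) = x₂ * (p * (1 - q) * p) := by
    calc (x₂ * (p * (1 - q) * p)) * (x₁ * (p * (1 - q) * p))
        = x₂ * ((p * (1 - q) * p) * x₁ * (p * (1 - q) * p)) := by simp only [mul_assoc]
      _ = x₂ * (p * (1 - q) * p) := by rw [y4]
  have y11 : x₁ * (p * (1 - q) * p) = x₂ * (p * (1 - q) * p) := by
    have hst : star (x₁ * (p * (1 - q) * p)) = x₁ * (p * (1 - q) * p) := by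
      rw [y6a]; exact st
    have := congrArg star y10
    rw [star_mul, hst, h₂.2.2.2] at this
    rw [← y9, this]
  have master1 : x₁ * (p * (1 - q) * p) = (p * (1 - q) * p) * x₂ := by
    rw [y11, ← hfs]
  ---------------------------------------------------------------- L2
  have cDE : (p * (1 - q)) * (((1 - q) * p) * x₂) = (p * (1 - q) * p) * x₂ := by
    rw [← mul_assoc, a7]
  have k4 : (p * (1 - q)) * ((1 - q) * p) = p * (1 - q) * p := a7
  have k1 : ((p * (1 - q) * p) * x₂ * (p * (1 - q))) * (((1 - q) * p) * (x₂ * (p * (1 - q) * p)))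
      = p * (1 - q) * p := by
    calc ((p * (1 - q) * p) * x₂ * (p * (1 - q))) * (((1 - q) * p) * (x₂ * (p * (1 - q) * p)))
        = (p * (1 - q) * p) * x₂ * ((p * (1 - q)) * ((1 - q) * p)) * x₂ * (p * (1 - q) * p) := by
          simp only [mul_assoc]
      _ = (p * (1 - q) * p) * x₂ * (p * (1 - q) * p) * x₂ * (p * (1 - q) * p) := by rw [k4]
      _ = p * (1 - q) * p := by rw [h₂.1, h₂.1]
  have k2 : ((p * (1 - q) * p) * x₂ * (p * (1 - q))) * ((1 - q) * p) = p * (1 - q) * p := by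
    calc ((p * (1 - q) * p) * x₂ * (p * (1 - q))) * ((1 - q) * p)
        = (p * (1 - q) * p) * x₂ * ((p * (1 - q)) * ((1 - q) * p)) := by simp only [mul_assoc]
      _ = (p * (1 - q) * p) * x₂ * (p * (1 - q) * p) := by rw [k4]
      _ = p * (1 - q) * p := h₂.1
  have k3 : (p * (1 - q)) * (((1 - q) * p) * (x₂ * (p * (1 - q) * p))) = p * (1 - q) * p := by
    calc (p * (1 - q)) * (((1 - q) * p) * (x₂ * (p * (1 - q) * p)))
        = ((p * (1 - q)) * ((1 - q) * p)) * x₂ * (p * (1 - q) * p) := by simp only [mul_assoc]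
      _ = (p * (1 - q) * p) * x₂ * (p * (1 - q) * p) := by rw [k4]
      _ = p * (1 - q) * p := h₂.1
  have wsw : ((p * (1 - q) * p) * x₂ * (p * (1 - q)) - p * (1 - q)) *
      (((1 - q) * p) * (x₂ * (p * (1 - q) * p)) - (1 - q) * p) = 0 := by
    have expand : ∀ X Y Z W : R, (X - Y) * (Z - W) = X * Z - X * W - (Y * Z - Y * W) := by
      intros; noncomm_ring
    rw [expand, k1, k2, k3, k4]
    abel
  have swdef : star ((p * (1 - q) * p) * x₂ * (p * (1 - q)) - p * (1 - q))
      = ((1 - q) * p) * (x₂ * (p * (1 - q) * p)) - (1 - q) * p := by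
    simp only [star_sub, star_mul, star_one, hx₂s, hps, hqs, mul_assoc]
  have L2 : (p * (1 - q) * p) * x₂ * (p * (1 - q)) = p * (1 - q) := by
    have h0 : ((p * (1 - q) * p) * x₂ * (p * (1 - q)) - p * (1 - q)) *
        star ((p * (1 - q) * p) * x₂ * (p * (1 - q)) - p * (1 - q)) = 0 := by
      rw [swdef]; exact wsw
    have hz := hR (star ((p * (1 - q) * p) * x₂ * (p * (1 - q)) - p * (1 - q)))
      (by rw [star_star]; exact h0)
    have : (p * (1 - q) * p) * x₂ * (p * (1 - q)) - p * (1 - q) = 0 := by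
      have := congrArg star hz
      rwa [star_star, star_zero] at this
    rwa [sub_eq_zero] at this
  ---------------------------------------------------------------- L3 : x₄ = E x₂
  have c1 : (p * (1 - q)) * (((1 - q) * p) * x₂) * (p * (1 - q)) = p * (1 - q) := by
    rw [cDE]; exact L2
  have c2 : (((1 - q) * p) * x₂) * (p * (1 - q)) * (((1 - q) * p) * x₂) = ((1 - q) * p) * x₂ := by
    calc (((1 - q) * p) * x₂) * (p * (1 - q)) * (((1 - q) * p) * x₂)
        = ((1 - q) * p) * (x₂ * ((p * (1 - q)) * (((1 - q) * p) * x₂))) := by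
          simp only [mul_assoc]
      _ = ((1 - q) * p) * (x₂ * ((p * (1 - q) * p) * x₂)) := by rw [cDE]
      _ = ((1 - q) * p) * (x₂ * (p * (1 - q) * p) * x₂) := by rw [mul_assoc x₂]
      _ = ((1 - q) * p) * x₂ := by rw [h₂.2.1]
  have c3 : star ((p * (1 - q)) * (((1 - q) * p) * x₂)) = (p * (1 - q)) * (((1 - q) * p) * x₂) := by
    rw [cDE]; exact h₂.2.2.1
  have c4 : star ((((1 - q) * p) * x₂) * (p * (1 - q))) = (((1 - q) * p) * x₂) * (p * (1 - q)) := by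
    simp only [star_mul, star_sub, star_one, hps, hqs, hx₂s, mul_assoc]
  have hx₄ : x₄ = ((1 - q) * p) * x₂ := mp_unique h₄ ⟨c1, c2, c3, c4⟩
  have master2 : p * x₄ = (p * (1 - q) * p) * x₂ := by
    calc p * x₄ = p * (((1 - q) * p) * x₂) := by rw [hx₄]
      _ = (p * ((1 - q) * p)) * x₂ := (mul_assoc _ _ _).symm
      _ = (p * (1 - q) * p) * x₂ := by rw [← mul_assoc]
  ---------------------------------------------------------------- x₅ = star x₄
  have hx₅ : x₅ = star x₄ := by
    refine mp_unique h₅ ?_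
    have := mp_star h₄; rwa [sD] at this
  have master3 : x₅ * p = (p * (1 - q) * p) * x₂ := by
    calc x₅ * p = star x₄ * p := by rw [hx₅]
      _ = star (((1 - q) * p) * x₂) * p := by rw [hx₄]
      _ = (star x₂ * star ((1 - q) * p)) * p := by rw [star_mul]
      _ = (x₂ * (p * (1 - q))) * p := by
          rw [hx₂s, star_mul, star_sub, star_one, hps, hqs]
      _ = x₂ * (p * (1 - q) * p) := by simp only [mul_assoc]
      _ = (p * (1 - q) * p) * x₂ := hfs.symm
  ---------------------------------------------------------------- L4
  have hx₆s : star x₆ = x₆ := by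
    refine mp_unique ?_ h₆
    have := mp_star h₆; rwa [sM] at this
  have hk : (p - q) * x₆ = x₆ * (p - q) := by
    rw [← h₆.2.2.1, star_mul, hx₆s, sM]
  have hMy : (p - q) * (x₆ * x₆) = x₆ := by
    calc (p - q) * (x₆ * x₆) = ((p - q) * x₆) * x₆ := (mul_assoc _ _ _).symm
      _ = (x₆ * (p - q)) * x₆ := by rw [hk]
      _ = x₆ := h₆.2.1
  have hyM : (x₆ * x₆) * (p - q) = x₆ := by
    calc (x₆ * x₆) * (p - q) = x₆ * (x₆ * (p - q)) := mul_assoc _ _ _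
      _ = x₆ * ((p - q) * x₆) := by rw [hk]
      _ = (x₆ * (p - q)) * x₆ := (mul_assoc _ _ _).symm
      _ = x₆ := h₆.2.1
  have hNy : ((p - q) * (p - q)) * (x₆ * x₆) = (p - q) * x₆ := by
    calc ((p - q) * (p - q)) * (x₆ * x₆) = (p - q) * ((p - q) * (x₆ * x₆)) := mul_assoc _ _ _
      _ = (p - q) * x₆ := by rw [hMy]
  have hyN : (x₆ * x₆) * ((p - q) * (p - q)) = x₆ * (p - q) := by
    calc (x₆ * x₆) * ((p - q) * (p - q)) = ((x₆ * x₆) * (p - q)) * (p - q) := (mul_assoc _ _ _).symm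
      _ = x₆ * (p - q) := by rw [hyM]
  have n1 : ((p - q) * (p - q)) * (x₆ * x₆) * ((p - q) * (p - q)) = (p - q) * (p - q) := by
    rw [hNy, ← mul_assoc, h₆.1]
  have n2 : (x₆ * x₆) * ((p - q) * (p - q)) * (x₆ * x₆) = x₆ * x₆ := by
    rw [hyN, ← mul_assoc, h₆.2.1]
  have n3 : star (((p - q) * (p - q)) * (x₆ * x₆)) = ((p - q) * (p - q)) * (x₆ * x₆) := by
    rw [hNy, star_mul, hx₆s, sM, ← hk]
  have n4 : star ((x₆ * x₆) * ((p - q) * (p - q))) = (x₆ * x₆) * ((p - q) * (p - q)) := by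
    rw [hyN, star_mul, hx₆s, sM, hk]
  have mpN : IsMPInv ((p - q) * (p - q)) (x₆ * x₆) := ⟨n1, n2, n3, n4⟩
  have sN : star ((p - q) * (p - q)) = (p - q) * (p - q) := by rw [star_mul, sM]
  have aN2 : p * star ((p - q) * (p - q)) = star ((p - q) * (p - q)) * p := by
    rw [sN]; exact aN
  have hyp : p * (x₆ * x₆) = (x₆ * x₆) * p := mp_comm mpN aN aN2
  have z1 : p * x₆ * p = (p * (1 - q) * p) * (x₆ * x₆) := by
    calc p * x₆ * p = p * ((p - q) * (x₆ * x₆)) * p := by rw [hMy]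
      _ = (p * (p - q)) * ((x₆ * x₆) * p) := by simp only [mul_assoc]
      _ = (p * (p - q)) * (p * (x₆ * x₆)) := by rw [hyp]
      _ = ((p * (p - q)) * p) * (x₆ * x₆) := (mul_assoc _ _ _).symm
      _ = (p * (1 - q) * p) * (x₆ * x₆) := by rw [a8]
  have z6 : (p * (1 - q) * p) * x₂ * (p * x₆ * p) = (p * (1 - q) * p) * x₂ := by
    have z4 : (p * x₆ * p) * (p * (1 - q) * p) = p * (1 - q) * p := by
      calc (p * x₆ * p) * (p * (1 - q) * p)
          = ((p * (1 - q) * p) * (x₆ * x₆)) * (p * (1 - q) * p) := by rw [z1]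
        _ = ((p * (1 - q) * p) * (x₆ * x₆)) * (((p - q) * (p - q)) * p) := by rw [aB2]
        _ = (((p - q) * (p - q)) * p) * (x₆ * x₆) * (((p - q) * (p - q)) * p) := by rw [aB2]
        _ = ((p - q) * (p - q)) * ((p * (x₆ * x₆)) * (((p - q) * (p - q)) * p)) := by
            simp only [mul_assoc]
        _ = ((p - q) * (p - q)) * (((x₆ * x₆) * p) * (((p - q) * (p - q)) * p)) := by rw [hyp]
        _ = ((p - q) * (p - q)) * ((x₆ * x₆) * (p * (((p - q) * (p - q)) * p))) := by
            simp only [mul_assoc]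
        _ = ((p - q) * (p - q)) * ((x₆ * x₆) * (p * (p * (1 - q) * p))) := by rw [aB2]
        _ = ((p - q) * (p - q)) * ((x₆ * x₆) * (p * (1 - q) * p)) := by rw [hpB]
        _ = ((p - q) * (p - q)) * ((x₆ * x₆) * (((p - q) * (p - q)) * p)) := by rw [aB2]
        _ = (((p - q) * (p - q)) * (x₆ * x₆) * ((p - q) * (p - q))) * p := by
            simp only [mul_assoc]
        _ = ((p - q) * (p - q)) * p := by rw [n1]
        _ = p * (1 - q) * p := aB2
    have z3 : star (p * x₆ * p) = p * x₆ * p := by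
      calc star (p * x₆ * p) = star p * (star x₆ * star p) := by rw [star_mul, star_mul]
        _ = p * (x₆ * p) := by rw [hps, hx₆s]
        _ = p * x₆ * p := by rw [← mul_assoc]
    have z5 : (p * (1 - q) * p) * (p * x₆ * p) = p * (1 - q) * p := by
      have := congrArg star z4
      rwa [star_mul, sB, z3] at this
    calc (p * (1 - q) * p) * x₂ * (p * x₆ * p)
        = x₂ * (p * (1 - q) * p) * (p * x₆ * p) := by rw [hfs]
      _ = x₂ * ((p * (1 - q) * p) * (p * x₆ * p)) := mul_assoc _ _ _
      _ = x₂ * (p * (1 - q) * p) := by rw [z5]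
      _ = (p * (1 - q) * p) * x₂ := hfs.symm
  have z7 : (p * (1 - q) * p) * x₂ * (p * x₆ * p) = p * x₆ * p := by
    calc (p * (1 - q) * p) * x₂ * (p * x₆ * p)
        = (p * (1 - q) * p) * x₂ * ((p * (1 - q) * p) * (x₆ * x₆)) := by rw [z1]
      _ = ((p * (1 - q) * p) * x₂ * (p * (1 - q) * p)) * (x₆ * x₆) := (mul_assoc _ _ _).symm
      _ = (p * (1 - q) * p) * (x₆ * x₆) := by rw [h₂.1]
      _ = p * x₆ * p := z1.symm
  have master4 : p * x₆ * p = (p * (1 - q) * p) * x₂ := z7.symm.trans z6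
  ---------------------------------------------------------------- x₃
  have hx₃ : x₃ = star x₁ := by
    refine mp_unique h₃ ?_
    have := mp_star h₁; rwa [sA] at this
  have master5 : (p * (1 - q) * p) * x₃ = (p * (1 - q) * p) * x₂ := by
    calc (p * (1 - q) * p) * x₃ = (p * (1 - q) * p) * star x₁ := by rw [hx₃]
      _ = star (x₁ * (p * (1 - q) * p)) := by rw [star_mul, sB]
      _ = star ((p * (1 - q) * p) * x₂) := by rw [master1]
      _ = star x₂ * star (p * (1 - q) * p) := by rw [star_mul]
      _ = x₂ * (p * (1 - q) * p) := by rw [hx₂s, sB]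
      _ = (p * (1 - q) * p) * x₂ := hfs.symm
  ---------------------------------------------------------------- assemble
  have mD : (p * (1 - q)) * x₂ = (p * (1 - q) * p) * x₂ := by
    calc (p * (1 - q)) * x₂ = (p * (1 - q)) * (p * x₂) := by rw [hpx₂]
      _ = (p * (1 - q) * p) * x₂ := (mul_assoc _ _ _).symm
  refine ⟨?_, ?_, ?_, ?_, ?_⟩
  · exact master1.trans mD.symm
  · exact mD.trans master5.symm
  · exact master5.trans master2.symm
  · exact master2.trans master3.symm
  · exact master3.trans master4.symm
end

section
/- Let R be a *-reducing ring with involution and let p, q ∈ R be projections. Then the anti-commutator pq + qp is Moore–Penrose invertible if and only if both p + q and pq are Moore–Penrose invertible. -/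
set_option linter.unusedSectionVars false
set_option maxHeartbeats 1000000

namespace Stmt16Aux

variable {R : Type*} [Ring R] [StarRing R]

/-- group inverse -/
def IsGrpInv (a b : R) : Prop := a * b * a = a ∧ b * a * b = b ∧ a * b = b * a

theorem mp_unique {a b b' : R} (h : IsMPInv a b) (h' : IsMPInv a b') : b = b' := by
  obtain ⟨h1, h2, h3, h4⟩ := h
  obtain ⟨h1', h2', h3', h4'⟩ := h'
  have hab : a * b = a * b' := by
    have e1 : a * b = (a * b') * (a * b) := by
      conv_lhs => rw [← h1']
      noncomm_ring
    calc a * b = star (a * b) := h3.symm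
      _ = star ((a * b') * (a * b)) := by rw [← e1]
      _ = star (a * b) * star (a * b') := by rw [star_mul]
      _ = (a * b) * (a * b') := by rw [h3, h3']
      _ = (a * b * a) * b' := by noncomm_ring
      _ = a * b' := by rw [h1]
  have hba : b * a = b' * a := by
    have e1 : b * a = (b * a) * (b' * a) := by
      conv_lhs => rw [← h1']
      noncomm_ring
    calc b * a = star (b * a) := h4.symm
      _ = star ((b * a) * (b' * a)) := by rw [← e1]
      _ = star (b' * a) * star (b * a) := by rw [star_mul]
      _ = (b' * a) * (b * a) := by rw [h4, h4']
      _ = b' * (a * b * a) := by noncomm_ring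
      _ = b' * a := by rw [h1]
  calc b = b * a * b := h2.symm
    _ = (b' * a) * b := by rw [hba]
    _ = b' * (a * b) := by rw [mul_assoc]
    _ = b' * (a * b') := by rw [hab]
    _ = b' * a * b' := by rw [mul_assoc]
    _ = b' := h2'

theorem mp_star_inv {a c : R} (ha : star a = a) (h : IsMPInv a c) : IsMPInv a (star c) := by
  obtain ⟨h1, h2, h3, h4⟩ := h
  refine ⟨?_, ?_, ?_, ?_⟩
  · have := congrArg star h1
    rwa [star_mul, star_mul, ha, ← mul_assoc] at this
  · have := congrArg star h2
    rwa [star_mul, star_mul, ha, ← mul_assoc] at this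
  · have e1 : star (a * star c) = c * a := by rw [star_mul, star_star, ha]
    have key : a * star c = c * a := by
      calc a * star c = star a * star c := by rw [ha]
        _ = star (c * a) := (star_mul c a).symm
        _ = c * a := h4
    rw [e1]; exact key.symm
  · have e1 : star (star c * a) = a * c := by rw [star_mul, star_star, ha]
    have key : star c * a = a * c := by
      calc star c * a = star c * star a := by rw [ha]
        _ = star (a * c) := (star_mul a c).symm
        _ = a * c := h3
    rw [e1]; exact key.symm

theorem mp_sa {a c : R} (ha : star a = a) (h : IsMPInv a c) : star c = c :=
  mp_unique (mp_star_inv ha h) h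

theorem mp_comm {a c : R} (ha : star a = a) (h : IsMPInv a c) : a * c = c * a := by
  have hc := mp_sa ha h
  calc a * c = star (a * c) := h.2.2.1.symm
    _ = star c * star a := by rw [star_mul]
    _ = c * a := by rw [hc, ha]

/-- the group inverse commutes with everything commuting with the element -/
theorem grp_commute {x h y : R} (hg : IsGrpInv x h) (hy : x * y = y * x) : h * y = y * h := by
  obtain ⟨g1, g2, g3⟩ := hg
  have hxxh : x * x * h = x := by
    calc x * x * h = x * (x * h) := by rw [mul_assoc]
      _ = x * (h * x) := by rw [g3]
      _ = x * h * x := by rw [mul_assoc]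
      _ = x := g1
  have hhhx : h * h * x = h := by
    calc h * h * x = h * (h * x) := by rw [mul_assoc]
      _ = h * (x * h) := by rw [← g3]
      _ = h * x * h := by rw [mul_assoc]
      _ = h := g2
  have hxhh : x * h * h = h := by
    calc x * h * h = h * x * h := by rw [g3]
      _ = h := g2
  have e1 : h * y = h * y * x * h := by
    calc h * y = h * h * x * y := by rw [hhhx]
      _ = h * h * (y * x) := by rw [mul_assoc (h*h) x y, hy]
      _ = h * h * (y * (x * x * h)) := by rw [hxxh]
      _ = h * h * (y * x) * x * h := by noncomm_ring
      _ = h * h * (x * y) * x * h := by rw [hy]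
      _ = h * h * x * y * x * h := by noncomm_ring
      _ = h * y * x * h := by rw [hhhx]
  have step1 : h * y = x * h * (y * h) := by
    calc h * y = h * y * x * h := e1
      _ = h * (y * x) * h := by noncomm_ring
      _ = h * (x * y) * h := by rw [hy]
      _ = h * x * y * h := by noncomm_ring
      _ = x * h * y * h := by rw [← g3]
      _ = x * h * (y * h) := by noncomm_ring
  have e2 : y * h = x * y * (h * h) := by
    calc y * h = y * (x * h * h) := by rw [hxhh]
      _ = y * x * (h * h) := by noncomm_ring
      _ = x * y * (h * h) := by rw [← hy]
  have step2 : y * h = x * h * (y * h) := by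
    calc y * h = x * y * (h * h) := e2
      _ = (x * h * x) * y * (h * h) := by rw [g1]
      _ = x * h * (x * y * (h * h)) := by noncomm_ring
      _ = x * h * (y * h) := by rw [← e2]
  rw [step1, ← step2]

theorem lifte {a b c : R} (h : a * b = c) : ∀ y : R, a * (b * y) = c * y :=
  fun y => by rw [← mul_assoc, h]

theorem liftr {a b c d : R} (h : a * b = c * d) : ∀ y : R, a * (b * y) = c * (d * y) :=
  fun y => by rw [← mul_assoc, h, mul_assoc]

/-- self-adjoint element whose square is group invertible (with self-adjoint
group inverse) is MP invertible, with MP inverse `x * H`. -/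
theorem sa_sq_grp_mp (hR : IsStarReducing R) {x H : R} (hx : star x = x)
    (hg : IsGrpInv (x * x) H) (hH : star H = H) : IsMPInv x (x * H) := by
  obtain ⟨g1, g2, g3⟩ := hg
  have hHx : H * x = x * H := grp_commute ⟨g1, g2, g3⟩ (by noncomm_ring)
  have hpush : ∀ y : R, H * (x * y) = x * (H * y) := liftr hHx
  have K1 : x * (x * (x * (x * H))) = x * x := by
    calc x * (x * (x * (x * H))) = x * x * H * (x * x) := by
          simp only [mul_assoc, hHx, hpush]
      _ = x * x := g1
  have K1' : ∀ y : R, x * (x * (x * (x * (H * y)))) = x * (x * y) := fun y => by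
    have := congrArg (· * y) K1
    simpa only [mul_assoc] using this
  have K2 : x * (x * (H * H)) = H := by
    calc x * (x * (H * H)) = H * (x * x) * H := by simp only [mul_assoc, hHx, hpush]
      _ = H := g2
  have K2' : ∀ y : R, x * (x * (H * (H * y))) = H * y := fun y => by
    have := congrArg (· * y) K2
    simpa only [mul_assoc] using this
  have key : x * (x * (x * H)) = x := by
    set y := x - x * (x * (x * H)) with hy
    have hystar : star y = y := by
      rw [hy, star_sub, hx, star_mul, star_mul, star_mul, hH, hx]
      have : H * x * x * x = x * (x * (x * H)) := by
        simp only [mul_assoc, hHx, hpush]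
      rw [this]
    have hyy : star y * y = 0 := by
      rw [hystar, hy]
      have expand : (x - x * (x * (x * H))) * (x - x * (x * (x * H)))
          = x * x - x * (x * (x * (x * H))) - x * (x * (x * (H * x)))
            + x * (x * (x * (H * (x * (x * (x * H))))))  := by noncomm_ring
      rw [expand]
      have e2 : x * (x * (x * (H * x))) = x * x := by
        simp only [hpush, hHx, mul_assoc]
        exact K1
      have e3 : x * (x * (x * (H * (x * (x * (x * H)))))) = x * x := by
        simp only [hpush, hHx, mul_assoc, K1', K2', K1, K2]
      rw [K1, e2, e3]
      abel
    have h0 : x - x * (x * (x * H)) = 0 := hR y hyy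
    exact (sub_eq_zero.mp h0).symm
  have key' : ∀ y : R, x * (x * (x * (H * y))) = x * y := fun y => by
    have := congrArg (· * y) key
    simpa only [mul_assoc] using this
  refine ⟨?_, ?_, ?_, ?_⟩
  · calc x * (x * H) * x = x * (x * (x * H)) := by simp only [mul_assoc, hHx, hpush]
      _ = x := key
  · have : x * H * x * (x * H) = x * (x * (x * (H * H))) := by
      simp only [mul_assoc, hHx, hpush]
    rw [this, key' H]
  · have h5 : star (x * (x * H)) = H * x * x := by rw [star_mul, star_mul, hH, hx]
    rw [h5]
    simp only [mul_assoc, hHx, hpush]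
  · have h5 : star (x * H * x) = x * (H * x) := by
      rw [star_mul, star_mul, hH, hx]
    rw [h5]
    simp only [mul_assoc, hHx, hpush]

/-- self-adjoint MP invertible element has group invertible square -/
theorem sa_mp_sq_grp {x c : R} (hx : star x = x) (h : IsMPInv x c) :
    IsGrpInv (x * x) (c * c) := by
  have hcs : star c = c := mp_sa hx h
  have hcc : x * c = c * x := mp_comm hx h
  obtain ⟨h1, h2, h3, h4⟩ := h
  have hcp : c * x = x * c := hcc.symm
  have hpush : ∀ y : R, c * (x * y) = x * (c * y) := liftr hcp
  have C1 : x * (x * c) = x := by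
    calc x * (x * c) = x * (c * x) := by rw [hcp]
      _ = x * c * x := by rw [mul_assoc]
      _ = x := h1
  have C1' : ∀ y : R, x * (x * (c * y)) = x * y := fun y => by
    have := congrArg (· * y) C1
    simpa only [mul_assoc] using this
  have C2 : x * (c * c) = c := by
    calc x * (c * c) = c * (x * c) := by simp only [mul_assoc, hpush, hcp]
      _ = c * x * c := by rw [mul_assoc]
      _ = c := h2
  have C2' : ∀ y : R, x * (c * (c * y)) = c * y := fun y => by
    have := congrArg (· * y) C2
    simpa only [mul_assoc] using this
  refine ⟨?_, ?_, ?_⟩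
  · simp only [mul_assoc, hcp, hpush, C1', C2', C1, C2]
  · simp only [mul_assoc, hcp, hpush, C1', C2', C1, C2]
  · simp only [mul_assoc, hcp, hpush, C1', C2', C1, C2]

/-- from an MP inverse of `a`, a group inverse of `a * star a` -/
theorem mp_to_grp_aas {a b : R} (h : IsMPInv a b) :
    IsGrpInv (a * star a) (star b * b) := by
  obtain ⟨h1, h2, h3, h4⟩ := h
  have huk : a * star a * (star b * b) = a * b := by
    calc a * star a * (star b * b) = a * ((star a * star b) * b) := by noncomm_ring
      _ = a * (star (b * a) * b) := by rw [star_mul]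
      _ = a * ((b * a) * b) := by rw [h4]
      _ = (a * b * a) * b := by noncomm_ring
      _ = a * b := by rw [h1]
  have hku : star b * b * (a * star a) = a * b := by
    calc star b * b * (a * star a) = star b * (b * a) * star a := by noncomm_ring
      _ = star b * star (b * a) * star a := by rw [h4]
      _ = star b * (star a * star b) * star a := by rw [star_mul]
      _ = (star b * star a) * (star b * star a) := by noncomm_ring
      _ = star (a * b) * star (a * b) := by rw [star_mul]
      _ = (a * b) * (a * b) := by rw [h3]
      _ = (a * b * a) * b := by noncomm_ring
      _ = a * b := by rw [h1]
  refine ⟨?_, ?_, ?_⟩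
  · calc a * star a * (star b * b) * (a * star a) = (a * b) * (a * star a) := by rw [huk]
      _ = (a * b * a) * star a := by noncomm_ring
      _ = a * star a := by rw [h1]
  · calc star b * b * (a * star a) * (star b * b)
        = star b * b * ((a * star a) * (star b * b)) := by noncomm_ring
      _ = star b * b * (a * b) := by rw [huk]
      _ = star b * (b * a * b) := by noncomm_ring
      _ = star b * b := by rw [h2]
  · rw [huk, hku]

/-- from a group inverse of `a * star a`, an MP inverse of `a` -/
theorem grp_aas_to_mp (hR : IsStarReducing R) {a k : R} (hk : IsGrpInv (a * star a) k)
    (hks : star k = k) : IsMPInv a (star a * k) := by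
  obtain ⟨g1, g2, g3⟩ := hk
  have key : a * star a * k * a = a := by
    set y := a - a * star a * k * a with hy
    have hstar : star y = star a - star a * (k * (a * star a)) := by
      rw [hy, star_sub]
      congr 1
      calc star (a * star a * k * a) = star a * star (a * star a * k) := by rw [star_mul]
        _ = star a * (star k * star (a * star a)) := by rw [star_mul]
        _ = star a * (k * (star (star a) * star a)) := by rw [hks, star_mul]
        _ = star a * (k * (a * star a)) := by rw [star_star]
    have hyy : y * star y = 0 := by
      rw [hstar, hy]
      have ex : (a - a * star a * k * a) * (star a - star a * (k * (a * star a)))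
          = a * star a - a * star a * k * (a * star a) - (a * star a * k * (a * star a)
            - a * star a * k * (a * star a * k * (a * star a))) := by noncomm_ring
      rw [ex, g1, g1]
      abel
    have h00 : star (star y) * star y = 0 := by rw [star_star, hyy]
    have hy0 : star y = 0 := hR (star y) h00
    have hyz : y = 0 := by
      calc y = star (star y) := (star_star y).symm
        _ = star 0 := by rw [hy0]
        _ = 0 := star_zero R
    rw [hy] at hyz
    exact (sub_eq_zero.mp hyz).symm
  refine ⟨?_, ?_, ?_, ?_⟩
  · calc a * (star a * k) * a = a * star a * k * a := by noncomm_ring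
      _ = a := key
  · calc star a * k * a * (star a * k) = star a * (k * (a * star a) * k) := by noncomm_ring
      _ = star a * k := by rw [g2]
  · have e1 : a * (star a * k) = a * star a * k := by rw [mul_assoc]
    rw [e1]
    calc star (a * star a * k) = star k * star (a * star a) := by rw [star_mul]
      _ = k * (star (star a) * star a) := by rw [hks, star_mul]
      _ = k * (a * star a) := by rw [star_star]
      _ = a * star a * k := by rw [← g3, mul_assoc]
  · calc star (star a * k * a) = star a * star (star a * k) := by rw [star_mul]
      _ = star a * (star k * star (star a)) := by rw [star_mul]
      _ = star a * (k * a) := by rw [hks, star_star]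
      _ = star a * k * a := by rw [mul_assoc]

/-- group inverses add along an orthogonal decomposition -/
theorem grp_orth_sum {u v k l : R} (h1 : IsGrpInv u k) (h2 : IsGrpInv v l)
    (huv : u * v = 0) (hvu : v * u = 0) : IsGrpInv (u + v) (k + l) := by
  obtain ⟨a1, a2, a3⟩ := h1
  obtain ⟨b1, b2, b3⟩ := h2
  have hkku : k = k * k * u := by
    calc k = k * u * k := a2.symm
      _ = k * (u * k) := by rw [mul_assoc]
      _ = k * (k * u) := by rw [a3]
      _ = k * k * u := by rw [mul_assoc]
  have hukk : k = u * k * k := by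
    calc k = k * u * k := a2.symm
      _ = (u * k) * k := by rw [← a3]
  have hllv : l = l * l * v := by
    calc l = l * v * l := b2.symm
      _ = l * (v * l) := by rw [mul_assoc]
      _ = l * (l * v) := by rw [b3]
      _ = l * l * v := by rw [mul_assoc]
  have hvll : l = v * l * l := by
    calc l = l * v * l := b2.symm
      _ = (v * l) * l := by rw [← b3]
  have kv : k * v = 0 := by
    calc k * v = (k * k * u) * v := by rw [← hkku]
      _ = k * k * (u * v) := by rw [mul_assoc]
      _ = 0 := by rw [huv, mul_zero]
  have vk : v * k = 0 := by
    calc v * k = v * (u * k * k) := by rw [← hukk]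
      _ = (v * u) * (k * k) := by noncomm_ring
      _ = 0 := by rw [hvu, zero_mul]
  have lu : l * u = 0 := by
    calc l * u = (l * l * v) * u := by rw [← hllv]
      _ = l * l * (v * u) := by rw [mul_assoc]
      _ = 0 := by rw [hvu, mul_zero]
  have ul : u * l = 0 := by
    calc u * l = u * (v * l * l) := by rw [← hvll]
      _ = (u * v) * (l * l) := by noncomm_ring
      _ = 0 := by rw [huv, zero_mul]
  have e1 : (u + v) * (k + l) = u * k + v * l := by
    have ex : (u + v) * (k + l) = u * k + u * l + (v * k + v * l) := by noncomm_ring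
    rw [ex, ul, vk]
    abel
  have e2 : (k + l) * (u + v) = k * u + l * v := by
    have ex : (k + l) * (u + v) = k * u + k * v + (l * u + l * v) := by noncomm_ring
    rw [ex, kv, lu]
    abel
  refine ⟨?_, ?_, ?_⟩
  · rw [e1]
    have ex : (u * k + v * l) * (u + v)
        = u * k * u + u * (k * v) + (v * (l * u) + v * l * v) := by noncomm_ring
    rw [ex, kv, lu, a1, b1, mul_zero, mul_zero]
    abel
  · rw [e2]
    have ex : (k * u + l * v) * (k + l)
        = k * u * k + k * (u * l) + (l * (v * k) + l * v * l) := by noncomm_ring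
    rw [ex, ul, vk, a2, b2, mul_zero, mul_zero]
    abel
  · rw [e1, e2, a3, b3]

/-- from a group inverse of an orthogonal sum, a group inverse of a summand -/
theorem grp_summand (hR : IsStarReducing R) {u v W : R} (h : IsGrpInv (u + v) W)
    (hW : star W = W) (hu : star u = u) (hv : star v = v)
    (huv : u * v = 0) (hvu : v * u = 0) :
    IsGrpInv u (u * (W * W)) ∧ star (u * (W * W)) = u * (W * W) := by
  obtain ⟨g1, g2, g3⟩ := h
  have hcomm : (u + v) * u = u * (u + v) := by
    have l : (u + v) * u = u * u + v * u := by noncomm_ring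
    have r : u * (u + v) = u * u + u * v := by noncomm_ring
    rw [l, r, huv, hvu]
  have hWu : W * u = u * W := grp_commute ⟨g1, g2, g3⟩ hcomm
  have hpush : ∀ y : R, W * (u * y) = u * (W * y) := liftr hWu
  have huw : u * (u + v) = u * u := by rw [mul_add, huv, add_zero]
  have hwWW : (u + v) * (W * W) = W := by
    calc (u + v) * (W * W) = ((u + v) * W) * W := by rw [mul_assoc]
      _ = (W * (u + v)) * W := by rw [g3]
      _ = W := g2
  have hcomm2 : ((u + v) * W) * u = u * ((u + v) * W) := by
    calc ((u + v) * W) * u = (u + v) * (W * u) := by rw [mul_assoc]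
      _ = (u + v) * (u * W) := by rw [hWu]
      _ = ((u + v) * u) * W := by rw [mul_assoc]
      _ = (u * (u + v)) * W := by rw [hcomm]
      _ = u * ((u + v) * W) := by rw [mul_assoc]
  have Q : (u + v) * ((u + v) * W) = u + v := by
    calc (u + v) * ((u + v) * W) = (u + v) * (W * (u + v)) := by rw [g3]
      _ = (u + v) * W * (u + v) := by rw [mul_assoc]
      _ = u + v := g1
  have master : u * u * ((u + v) * W) = u * u := by
    calc u * u * ((u + v) * W) = (u * (u + v)) * ((u + v) * W) := by rw [huw]
      _ = u * ((u + v) * ((u + v) * W)) := by rw [mul_assoc]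
      _ = u * (u + v) := by rw [Q]
      _ = u * u := huw
  have key : u * ((u + v) * W) = u := by
    set y := u - u * ((u + v) * W) with hy
    have hself : star y = y := by
      rw [hy, star_sub, hu]
      congr 1
      calc star (u * ((u + v) * W)) = star ((u + v) * W) * star u := by rw [star_mul]
        _ = (star W * star (u + v)) * u := by rw [star_mul, hu]
        _ = (W * (u + v)) * u := by rw [hW, star_add, hu, hv]
        _ = ((u + v) * W) * u := by rw [← g3]
        _ = u * ((u + v) * W) := hcomm2
    have hyy : y * y = 0 := by
      rw [hy]
      have ex : (u - u * ((u + v) * W)) * (u - u * ((u + v) * W))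
          = u * u - u * (u * ((u + v) * W)) - (u * ((u + v) * W)) * u
            + (u * ((u + v) * W)) * (u * ((u + v) * W)) := by noncomm_ring
      have T1 : u * (u * ((u + v) * W)) = u * u := by
        rw [← mul_assoc]; exact master
      have T2 : (u * ((u + v) * W)) * u = u * u := by
        calc (u * ((u + v) * W)) * u = u * (((u + v) * W) * u) := by rw [mul_assoc]
          _ = u * (u * ((u + v) * W)) := by rw [hcomm2]
          _ = u * u := T1
      have R2 : ((u + v) * W) * ((u + v) * W) = (u + v) * W := by
        calc ((u + v) * W) * ((u + v) * W) = ((u + v) * W * (u + v)) * W := by noncomm_ring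
          _ = (u + v) * W := by rw [g1]
      have T3 : (u * ((u + v) * W)) * (u * ((u + v) * W)) = u * u := by
        calc (u * ((u + v) * W)) * (u * ((u + v) * W))
            = u * ((((u + v) * W) * u) * ((u + v) * W)) := by noncomm_ring
          _ = u * ((u * ((u + v) * W)) * ((u + v) * W)) := by rw [hcomm2]
          _ = u * (u * (((u + v) * W) * ((u + v) * W))) := by noncomm_ring
          _ = u * (u * ((u + v) * W)) := by rw [R2]
          _ = u * u := T1
      rw [ex, T1, T2, T3]
      abel
    have h00 : star y * y = 0 := by rw [hself, hyy]
    have hy0 : y = 0 := hR y h00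
    rw [hy] at hy0
    exact (sub_eq_zero.mp hy0).symm
  have D1 : u * (u * (W * W)) = u * W := by
    calc u * (u * (W * W)) = u * u * (W * W) := by rw [mul_assoc]
      _ = (u * (u + v)) * (W * W) := by rw [huw]
      _ = u * ((u + v) * (W * W)) := by rw [mul_assoc]
      _ = u * W := by rw [hwWW]
  have D2 : u * (u * W) = u := by
    calc u * (u * W) = u * u * W := by rw [mul_assoc]
      _ = (u * (u + v)) * W := by rw [huw]
      _ = u * ((u + v) * W) := by rw [mul_assoc]
      _ = u := key
  have hcomm3 : (W * W) * u = u * (W * W) := by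
    calc (W * W) * u = W * (W * u) := by rw [mul_assoc]
      _ = W * (u * W) := by rw [hWu]
      _ = (W * u) * W := by rw [mul_assoc]
      _ = (u * W) * W := by rw [hWu]
      _ = u * (W * W) := by rw [mul_assoc]
  have hA3 : u * (u * (W * W)) = (u * (W * W)) * u := by
    simp only [mul_assoc, hWu, hpush]
  have hku : (u * (W * W)) * u = u * W := by rw [← hA3, D1]
  refine ⟨⟨?_, ?_, ?_⟩, ?_⟩
  · calc u * (u * (W * W)) * u = (u * W) * u := by rw [D1]
      _ = u * (W * u) := by rw [mul_assoc]
      _ = u * (u * W) := by rw [hWu]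
      _ = u := D2
  · calc (u * (W * W)) * u * (u * (W * W)) = (u * W) * (u * (W * W)) := by rw [hku]
      _ = u * (u * (W * (W * W))) := by simp only [mul_assoc, hpush]
      _ = (u * (u * W)) * (W * W) := by simp only [mul_assoc]
      _ = u * (W * W) := by rw [D2]
  · calc u * (u * (W * W)) = u * ((W * W) * u) := by rw [hcomm3]
      _ = u * (W * W) * u := by rw [← mul_assoc]
  · calc star (u * (W * W)) = star (W * W) * star u := by rw [star_mul]
      _ = (star W * star W) * u := by rw [star_mul, hu]
      _ = (W * W) * u := by rw [hW]
      _ = u * (W * W) := hcomm3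
/-- key lemma: if `p*q*p` is group invertible then so is `(1-p)*(1-q)*(1-p)` -/
theorem ubar_grp (hR : IsStarReducing R) {p q k : R}
    (hp2 : p * p = p) (hps : star p = p) (hq2 : q * q = q) (hqs : star q = q)
    (hk : IsGrpInv (p * q * p) k) (hks : star k = k) :
    ∃ kb, IsGrpInv ((1 - p) * (1 - q) * (1 - p)) kb ∧ star kb = kb := by
  obtain ⟨g1, g2, g3⟩ := hk
  have hup : p * q * p * p = p * q * p := by rw [mul_assoc (p * q) p p, hp2]
  have hpu : p * (p * q * p) = p * q * p := by
    rw [← mul_assoc, ← mul_assoc, hp2]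
  have hkku : k = k * k * (p * q * p) := by
    calc k = k * (p * q * p) * k := g2.symm
      _ = k * ((p * q * p) * k) := by rw [mul_assoc]
      _ = k * (k * (p * q * p)) := by rw [← g3]
      _ = k * k * (p * q * p) := by rw [← mul_assoc]
  have hukk : k = p * q * p * k * k := by
    calc k = k * (p * q * p) * k := g2.symm
      _ = (p * q * p * k) * k := by rw [g3]
  have kp : k * p = k := by
    calc k * p = (k * k * (p * q * p)) * p := by rw [← hkku]
      _ = k * k * (p * q * p * p) := by rw [mul_assoc]
      _ = k * k * (p * q * p) := by rw [hup]
      _ = k := hkku.symm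
  have pk : p * k = k := by
    calc p * k = p * (p * q * p * k * k) := by rw [← hukk]
      _ = (p * (p * q * p)) * (k * k) := by noncomm_ring
      _ = (p * q * p) * (k * k) := by rw [hpu]
      _ = p * q * p * k * k := by rw [← mul_assoc]
      _ = k := hukk.symm
  set s := p * q * p * k with hs
  have hs2 : s * s = s := by
    calc s * s = (p * q * p * k * (p * q * p)) * k := by rw [hs]; noncomm_ring
      _ = (p * q * p) * k := by rw [g1]
      _ = s := by rw [hs]
  have hss : star s = s := by
    rw [hs]
    calc star (p * q * p * k) = star k * star (p * q * p) := by rw [star_mul]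
      _ = star k * (star p * star (p * q)) := by rw [star_mul (p*q) p]
      _ = star k * (star p * (star q * star p)) := by rw [star_mul p q]
      _ = k * (p * (q * p)) := by rw [hks, hps, hqs]
      _ = k * (p * q * p) := congrArg (k * ·) (mul_assoc p q p).symm
      _ = p * q * p * k := by rw [← g3, ← hs]
  have hsk : s * k = k := by
    calc s * k = p * q * p * k * k := by rw [hs]
      _ = k := hukk.symm
  have hkσ : k * s = k := by
    calc k * s = k * (p * q * p) * k := by rw [hs, ← mul_assoc]
      _ = k := g2
  have pσ : p * s = s := by
    calc p * s = (p * (p * q * p)) * k := by rw [hs, ← mul_assoc]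
      _ = p * q * p * k := by rw [hpu]
      _ = s := by rw [hs]
  have σp : s * p = s := by
    calc s * p = p * q * p * (k * p) := by rw [hs, mul_assoc]
      _ = p * q * p * k := by rw [kp]
      _ = s := by rw [hs]
  have hus : p * q * p * s = p * q * p := by
    calc p * q * p * s = p * q * p * (k * (p * q * p)) := by rw [g3]
      _ = (p * q * p * k) * (p * q * p) := by rw [← mul_assoc]
      _ = s * (p * q * p) := by rw [← hs]
      _ = p * q * p := g1
  have hsu : s * (p * q * p) = p * q * p := g1
  set r := p - s with hr
  have hrs : star r = r := by rw [hr, star_sub, hps, hss]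
  have pr : p * r = r := by rw [hr, mul_sub, hp2, pσ]
  have rp : r * p = r := by rw [hr, sub_mul, hp2, σp]
  have rr : r * r = r := by
    rw [hr]
    calc (p - s) * (p - s) = p * p - p * s - (s * p - s * s) := by noncomm_ring
      _ = p - s - (s - s) := by rw [hp2, pσ, σp, hs2]
      _ = p - s := by abel
  have kr : k * r = 0 := by rw [hr, mul_sub, kp, hkσ, sub_self]
  have rk : r * k = 0 := by rw [hr, sub_mul, pk, hsk, sub_self]
  have ur : p * q * p * r = 0 := by rw [hr, mul_sub, hup, hus, sub_self]
  have ru : r * (p * q * p) = 0 := by rw [hr, sub_mul, hpu, hsu, sub_self]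
  have sr : s * r = 0 := by rw [hr, mul_sub, σp, hs2, sub_self]
  have rs : r * s = 0 := by rw [hr, sub_mul, pσ, hs2, sub_self]
  have rqr : r * q * r = 0 := by
    calc r * q * r = (r * p) * q * (p * r) := by rw [rp, pr]
      _ = r * ((p * q * p) * r) := by noncomm_ring
      _ = 0 := by rw [ur, mul_zero]
  have qr : q * r = 0 := by
    apply hR
    calc star (q * r) * (q * r) = (r * q) * (q * r) := by rw [star_mul, hqs, hrs]
      _ = r * (q * q) * r := by noncomm_ring
      _ = r * q * r := by rw [hq2]
      _ = 0 := rqr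
  have rq : r * q = 0 := by
    have h0 : star (q * r) = r * q := by rw [star_mul, hqs, hrs]
    rw [qr, star_zero] at h0
    exact h0.symm
  have hpsr : s + r = p := by rw [hr]; abel
  have hsqs : s * q * s = p * q * p := by
    have e : p * q * p = s * q * s := by
      calc p * q * p = (s + r) * q * (s + r) := by rw [hpsr]
        _ = s * q * s + s * (q * r) + r * q * (s + r) := by noncomm_ring
        _ = s * q * s := by rw [qr, mul_zero, rq, zero_mul, add_zero, add_zero]
    exact e.symm
  have hσqk : s * (q * k) = s := by
    calc s * (q * k) = s * (q * (s * k)) := by rw [hsk]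
      _ = (s * q * s) * k := by noncomm_ring
      _ = (p * q * p) * k := by rw [hsqs]
      _ = s := by rw [hs]
  have hkqσ : k * (q * s) = s := by
    calc k * (q * s) = (k * s) * (q * s) := by rw [hkσ]
      _ = k * (s * q * s) := by noncomm_ring
      _ = k * (p * q * p) := by rw [hsqs]
      _ = p * q * p * k := g3.symm
      _ = s := by rw [hs]
  have hkqk : k * (q * k) = k := by
    calc k * (q * k) = k * (q * (s * k)) := by rw [hsk]
      _ = (k * (q * s)) * k := by noncomm_ring
      _ = s * k := by rw [hkqσ]
      _ = k := hsk
  -- lifted rewrite rules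
  have hs2' : ∀ x : R, s * (s * x) = s * x := fun x => by rw [← mul_assoc, hs2]
  have hq2' : ∀ x : R, q * (q * x) = q * x := fun x => by rw [← mul_assoc, hq2]
  have hkσ' : ∀ x : R, k * (s * x) = k * x := fun x => by rw [← mul_assoc, hkσ]
  have hsk' : ∀ x : R, s * (k * x) = k * x := fun x => by rw [← mul_assoc, hsk]
  have hkqσ' : ∀ x : R, k * (q * (s * x)) = s * x := by
    intro x; rw [← mul_assoc, ← mul_assoc]
    rw [show k * q * s = s by rw [mul_assoc, hkqσ]]
  have hσqk' : ∀ x : R, s * (q * (k * x)) = s * x := by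
    intro x; rw [← mul_assoc, ← mul_assoc]
    rw [show s * q * k = s by rw [mul_assoc, hσqk]]
  have hkqk' : ∀ x : R, k * (q * (k * x)) = k * x := by
    intro x; rw [← mul_assoc, ← mul_assoc]
    rw [show k * q * k = k by rw [mul_assoc, hkqk]]
  set m := (1 - s) * ((1 - q) * (1 - s)) with hm
  set M := (1 - s) * ((1 - q + q * (k * q) + q * (k * (k * q))) * (1 - s)) with hM
  have big1 : m * (M * m) = m := by
    rw [hm, hM]
    simp only [mul_sub, sub_mul, mul_add, add_mul, mul_one, one_mul, mul_assoc,
      hs2, hq2, hkσ, hsk, hkqσ, hσqk, hkqk, hs2', hq2', hkσ', hsk', hkqσ', hσqk', hkqk']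
    noncomm_ring
  have big2 : M * (m * M) = M := by
    rw [hm, hM]
    simp only [mul_sub, sub_mul, mul_add, add_mul, mul_one, one_mul, mul_assoc,
      hs2, hq2, hkσ, hsk, hkqσ, hσqk, hkqk, hs2', hq2', hkσ', hsk', hkqσ', hσqk', hkqk']
    noncomm_ring
  have big3 : m * M = M * m := by
    rw [hm, hM]
    simp only [mul_sub, sub_mul, mul_add, add_mul, mul_one, one_mul, mul_assoc,
      hs2, hq2, hkσ, hsk, hkqσ, hσqk, hkqk, hs2', hq2', hkσ', hsk', hkqσ', hσqk', hkqk']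
    noncomm_ring
  have Pr : (1 - s) * r = r := by rw [sub_mul, one_mul, sr, sub_zero]
  have rP : r * (1 - s) = r := by rw [mul_sub, mul_one, rs, sub_zero]
  have h1qr : (1 - q) * r = r := by rw [sub_mul, one_mul, qr, sub_zero]
  have hr1q : r * (1 - q) = r := by rw [mul_sub, mul_one, rq, sub_zero]
  have mr : m * r = r := by
    calc m * r = (1 - s) * ((1 - q) * ((1 - s) * r)) := by rw [hm]; noncomm_ring
      _ = r := by rw [Pr, h1qr, Pr]
  have rm : r * m = r := by
    calc r * m = ((r * (1 - s)) * (1 - q)) * (1 - s) := by rw [hm]; noncomm_ring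
      _ = r := by rw [rP, hr1q, rP]
  have qr' : ∀ x : R, q * (r * x) = 0 := fun x => by rw [← mul_assoc, qr, zero_mul]
  have hinr : (1 - q + q * (k * q) + q * (k * (k * q))) * r = r := by
    have e1 : q * (k * q) * r = 0 := by
      rw [mul_assoc, mul_assoc, qr, mul_zero, mul_zero]
    have e2 : q * (k * (k * q)) * r = 0 := by
      rw [mul_assoc, mul_assoc, mul_assoc, qr, mul_zero, mul_zero, mul_zero]
    calc (1 - q + q * (k * q) + q * (k * (k * q))) * r
        = (1 - q) * r + q * (k * q) * r + q * (k * (k * q)) * r := by noncomm_ring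
      _ = r := by rw [h1qr, e1, e2, add_zero, add_zero]
  have hinl : r * (1 - q + q * (k * q) + q * (k * (k * q))) = r := by
    have e1 : r * (q * (k * q)) = 0 := by rw [← mul_assoc, rq, zero_mul]
    have e2 : r * (q * (k * (k * q))) = 0 := by rw [← mul_assoc, rq, zero_mul]
    calc r * (1 - q + q * (k * q) + q * (k * (k * q)))
        = r * (1 - q) + r * (q * (k * q)) + r * (q * (k * (k * q))) := by noncomm_ring
      _ = r := by rw [hr1q, e1, e2, add_zero, add_zero]
  have Mr : M * r = r := by
    calc M * r = (1 - s) * ((1 - q + q * (k * q) + q * (k * (k * q))) * ((1 - s) * r)) := by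
          rw [hM]; noncomm_ring
      _ = r := by rw [Pr, hinr, Pr]
  have rM : r * M = r := by
    calc r * M = ((r * (1 - s)) * (1 - q + q * (k * q) + q * (k * (k * q)))) * (1 - s) := by
          rw [hM]; noncomm_ring
      _ = r := by rw [rP, hinl, rP]
  have h1p : (1 : R) - p = (1 - s) - r := by rw [hr]; abel
  have hubar : (1 - p) * (1 - q) * (1 - p) = m - r := by
    calc (1 - p) * (1 - q) * (1 - p) = ((1 - s) - r) * (1 - q) * ((1 - s) - r) := by rw [h1p]
      _ = (1 - s) * ((1 - q) * (1 - s)) - (1 - s) * ((1 - q) * r)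
          - ((r * (1 - q)) * (1 - s) - r * ((1 - q) * r)) := by noncomm_ring
      _ = m - r - (r - r) := by rw [← hm, h1qr, Pr, hr1q, rP, rr]
      _ = m - r := by abel
  refine ⟨M - r, ?_, ?_⟩
  · rw [hubar]
    have e1 : (m - r) * (M - r) = m * M - r := by
      calc (m - r) * (M - r) = m * M - m * r - (r * M - r * r) := by noncomm_ring
        _ = m * M - r - (r - r) := by rw [mr, rM, rr]
        _ = m * M - r := by abel
    have e2 : (M - r) * (m - r) = M * m - r := by
      calc (M - r) * (m - r) = M * m - M * r - (r * m - r * r) := by noncomm_ring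
        _ = M * m - r - (r - r) := by rw [Mr, rm, rr]
        _ = M * m - r := by abel
    refine ⟨?_, ?_, ?_⟩
    · calc (m - r) * (M - r) * (m - r) = (m * M - r) * (m - r) := by rw [e1]
        _ = m * (M * m) - m * (M * r) - (r * m - r * r) := by noncomm_ring
        _ = m - m * r - (r - r) := by rw [big1, Mr, rm, rr]
        _ = m - r - (r - r) := by rw [mr]
        _ = m - r := by abel
    · calc (M - r) * (m - r) * (M - r) = (M * m - r) * (M - r) := by rw [e2]
        _ = M * (m * M) - M * (m * r) - (r * M - r * r) := by noncomm_ring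
        _ = M - M * r - (r - r) := by rw [big2, mr, rM, rr]
        _ = M - r - (r - r) := by rw [Mr]
        _ = M - r := by abel
    · rw [e1, e2, big3]
  · have hMs : star M = M := by
      rw [hM]
      have hinner : star (1 - q + q * (k * q) + q * (k * (k * q)))
          = 1 - q + q * (k * q) + q * (k * (k * q)) := by
        simp only [star_add, star_sub, star_one, star_mul, hqs, hks]
        simp only [mul_assoc]
      have hPs : star ((1 : R) - s) = 1 - s := by rw [star_sub, star_one, hss]
      calc star ((1 - s) * ((1 - q + q * (k * q) + q * (k * (k * q))) * (1 - s)))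
          = star ((1 - q + q * (k * q) + q * (k * (k * q))) * (1 - s)) * star (1 - s) := by
            rw [star_mul]
        _ = (star (1 - s) * star (1 - q + q * (k * q) + q * (k * (k * q)))) * star (1 - s) := by
            rw [star_mul]
        _ = (1 - s) * ((1 - q + q * (k * q) + q * (k * (k * q))) * (1 - s)) := by
            rw [hPs, hinner, mul_assoc]
    rw [star_sub, hMs, hrs]
/-- splitting lemma: if `(s²-s)²` is group invertible (s self-adjoint), then both
`1 - s + (s²-s)` and `s²` are group invertible with self-adjoint inverses. -/
theorem split_lemma (hR : IsStarReducing R) {s h : R} (hs : star s = s) (hh : star h = h)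
    (hg : IsGrpInv ((s * s - s) * (s * s - s)) h) :
    (∃ W, IsGrpInv (1 - s + (s * s - s)) W ∧ star W = W) ∧
    (∃ S, IsGrpInv (s * s) S ∧ star S = S) := by
  have hts : star (s * s - s) = s * s - s := by rw [star_sub, star_mul, hs]
  have hmp : IsMPInv (s * s - s) ((s * s - s) * h) := sa_sq_grp_mp hR hts hg hh
  obtain ⟨g1, g2, g3⟩ := hg
  set t := s * s - s with ht
  have hsh : h * s = s * h :=
    grp_commute ⟨g1, g2, g3⟩ (by rw [ht]; noncomm_ring)
  have hpushs : ∀ y : R, h * (s * y) = s * (h * y) := liftr hsh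
  have hht : h * t = t * h := by
    rw [ht]
    simp only [mul_sub, sub_mul, mul_assoc, hsh, hpushs]
  have hpusht : ∀ y : R, h * (t * y) = t * (h * y) := liftr hht
  have hst : t * s = s * t := by rw [ht]; noncomm_ring
  have hpushts : ∀ y : R, t * (s * y) = s * (t * y) := liftr hst
  have keyT : t * (t * (t * h)) = t := by
    have e := hmp.1
    calc t * (t * (t * h)) = t * (t * h) * t := by
          simp only [mul_assoc, hht, hpusht]
      _ = t := e
  set E := t * t * h with hE
  have c1 : E * E = E := by
    calc E * E = (E * (t * t)) * h := by rw [hE]; noncomm_ring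
      _ = t * t * h := by rw [g1]
      _ = E := by rw [hE]
  have c2 : h * E = h := by
    calc h * E = h * (t * t) * h := by rw [hE, ← mul_assoc]
      _ = h := g2
  have c2' : E * h = h := by
    calc E * h = h * (t * t) * h := by rw [g3]
      _ = h := g2
  have c3 : t * E = t := by
    calc t * E = t * (t * (t * h)) := by rw [hE]; noncomm_ring
      _ = t := keyT
  have c3' : E * t = t := by
    calc E * t = t * (t * (t * h)) := by rw [hE]; simp only [mul_assoc, hht, hpusht]
      _ = t := keyT
  have c4 : s * E = E * s := by
    rw [hE]
    simp only [mul_assoc, hsh, hpushs, hht, hpusht, hst, hpushts]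
  have hEs : star E = E := by
    rw [hE]
    calc star (t * t * h) = star h * star (t * t) := by rw [star_mul]
      _ = star h * (star t * star t) := by rw [star_mul]
      _ = h * (t * t) := by rw [hh, hts]
      _ = E := g3.symm
      _ = t * t * h := hE
  have hpushE : ∀ y : R, E * (s * y) = s * (E * y) := liftr c4.symm
  have c5 : t * (1 - E) = 0 := by rw [mul_sub, mul_one, c3, sub_self]
  have c5' : (1 - E) * t = 0 := by rw [sub_mul, one_mul, c3', sub_self]
  have c6 : h * (1 - E) = 0 := by rw [mul_sub, mul_one, c2, sub_self]
  have c6' : (1 - E) * h = 0 := by rw [sub_mul, one_mul, c2', sub_self]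
  have c7 : s * (1 - E) = (1 - E) * s := by
    rw [mul_sub, sub_mul, mul_one, one_mul, c4]
  have hpushG : ∀ y : R, (1 - E) * (s * y) = s * ((1 - E) * y) := liftr c7.symm
  have c9 : (1 - E) * (1 - E) = 1 - E := by
    calc (1 - E) * (1 - E) = 1 - E - E + E * E := by noncomm_ring
      _ = 1 - E - E + E := by rw [c1]
      _ = 1 - E := by abel
  have c8 : s * (s * (1 - E)) = s * (1 - E) := by
    have e : t * (1 - E) = s * s * (1 - E) - s * (1 - E) := by rw [ht]; noncomm_ring
    rw [e] at c5
    have e2 := sub_eq_zero.mp c5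
    rw [← mul_assoc]
    exact e2
  have hGs : star ((1 : R) - E) = 1 - E := by rw [star_sub, star_one, hEs]
  have hFs : star (s * (1 - E)) = s * (1 - E) := by
    rw [star_mul, hGs, hs, ← c7]
  have c10' : (s * (1 - E)) * s = s * (1 - E) := by
    calc (s * (1 - E)) * s = s * ((1 - E) * s) := by rw [mul_assoc]
      _ = s * (s * (1 - E)) := by rw [← c7]
      _ = s * (1 - E) := c8
  have c11 : (s * (1 - E)) * (s * (1 - E)) = s * (1 - E) := by
    calc (s * (1 - E)) * (s * (1 - E)) = s * ((1 - E) * (s * (1 - E))) := by rw [mul_assoc]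
      _ = s * (s * ((1 - E) * (1 - E))) := by rw [hpushG]
      _ = s * (s * (1 - E)) := by rw [c9]
      _ = s * (1 - E) := c8
  have c12 : t * (s * (1 - E)) = 0 := by
    calc t * (s * (1 - E)) = s * (t * (1 - E)) := hpushts _
      _ = 0 := by rw [c5, mul_zero]
  have c12' : (s * (1 - E)) * t = 0 := by
    rw [mul_assoc, c5', mul_zero]
  have c13 : h * (s * (1 - E)) = 0 := by
    calc h * (s * (1 - E)) = s * (h * (1 - E)) := hpushs _
      _ = 0 := by rw [c6, mul_zero]
  have c13' : (s * (1 - E)) * h = 0 := by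
    rw [mul_assoc, c6', mul_zero]
  have c15 : E * (1 - E) = 0 := by rw [mul_sub, mul_one, c1, sub_self]
  have c15' : (1 - E) * E = 0 := by rw [sub_mul, one_mul, c1, sub_self]
  have c14 : E * (s * (1 - E)) = 0 := by
    calc E * (s * (1 - E)) = s * (E * (1 - E)) := hpushE _
      _ = 0 := by rw [c15, mul_zero]
  have c14' : (s * (1 - E)) * E = 0 := by
    rw [mul_assoc, c15', mul_zero]
  have c16 : (s * (1 - E)) * (1 - E) = s * (1 - E) := by
    rw [mul_assoc, c9]
  have c16' : (1 - E) * (s * (1 - E)) = s * (1 - E) := by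
    calc (1 - E) * (s * (1 - E)) = s * ((1 - E) * (1 - E)) := hpushG _
      _ = s * (1 - E) := by rw [c9]
  have P1 : (1 - s + t) * (s * s) = t * t := by rw [ht]; noncomm_ring
  have P2 : s * s * (1 - s + t) = t * t := by rw [ht]; noncomm_ring
  have c17 : h * (1 - s + t) = (1 - s + t) * h := by
    calc h * (1 - s + t) = h - h * s + h * t := by noncomm_ring
      _ = h - s * h + t * h := by rw [hsh, hht]
      _ = (1 - s + t) * h := by noncomm_ring
  have wg : (1 - s + t) * (1 - E) = (1 - E) - s * (1 - E) := by
    calc (1 - s + t) * (1 - E) = (1 - E) - s * (1 - E) + t * (1 - E) := by noncomm_ring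
      _ = (1 - E) - s * (1 - E) := by rw [c5, add_zero]
  have gw : (1 - E) * (1 - s + t) = (1 - E) - s * (1 - E) := by
    calc (1 - E) * (1 - s + t) = (1 - E) - (1 - E) * s + (1 - E) * t := by noncomm_ring
      _ = (1 - E) - s * (1 - E) + 0 := by rw [← c7, c5']
      _ = (1 - E) - s * (1 - E) := by rw [add_zero]
  have wf : (1 - s + t) * (s * (1 - E)) = 0 := by
    calc (1 - s + t) * (s * (1 - E))
        = s * (1 - E) - s * (s * (1 - E)) + t * (s * (1 - E)) := by noncomm_ring
      _ = s * (1 - E) - s * (1 - E) + 0 := by rw [c8, c12]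
      _ = 0 := by abel
  have fw : (s * (1 - E)) * (1 - s + t) = 0 := by
    calc (s * (1 - E)) * (1 - s + t)
        = s * (1 - E) - (s * (1 - E)) * s + (s * (1 - E)) * t := by noncomm_ring
      _ = s * (1 - E) - s * (1 - E) + 0 := by rw [c10', c12']
      _ = 0 := by abel
  have hss_h : h * (s * s) = s * s * h := by
    simp only [mul_assoc, hpushs, hsh]
  have wW : (1 - s + t) * (s * s * h + ((1 - E) - s * (1 - E)))
      = E + ((1 - E) - s * (1 - E)) := by
    calc (1 - s + t) * (s * s * h + ((1 - E) - s * (1 - E)))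
        = ((1 - s + t) * (s * s)) * h
          + ((1 - s + t) * (1 - E) - (1 - s + t) * (s * (1 - E))) := by noncomm_ring
      _ = t * t * h + (((1 - E) - s * (1 - E)) - 0) := by rw [P1, wg, wf]
      _ = E + ((1 - E) - s * (1 - E)) := by rw [← hE, sub_zero]
  have Ww : (s * s * h + ((1 - E) - s * (1 - E))) * (1 - s + t)
      = E + ((1 - E) - s * (1 - E)) := by
    calc (s * s * h + ((1 - E) - s * (1 - E))) * (1 - s + t)
        = s * s * (h * (1 - s + t))
          + ((1 - E) * (1 - s + t) - (s * (1 - E)) * (1 - s + t)) := by noncomm_ring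
      _ = s * s * ((1 - s + t) * h) + (((1 - E) - s * (1 - E)) - 0) := by rw [c17, gw, fw]
      _ = (s * s * (1 - s + t)) * h + ((1 - E) - s * (1 - E)) := by rw [← mul_assoc, sub_zero]
      _ = t * t * h + ((1 - E) - s * (1 - E)) := by rw [P2]
      _ = E + ((1 - E) - s * (1 - E)) := by rw [← hE]
  have Ew : E * (1 - s + t) = (1 - s + t) - ((1 - E) - s * (1 - E)) := by
    have e1 : E * (1 - s + t) + (1 - E) * (1 - s + t) = 1 - s + t := by noncomm_ring
    rw [gw] at e1
    exact eq_sub_of_add_eq e1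
  have EW1 : E * (s * s * h) = s * s * h := by
    calc E * (s * s * h) = s * (s * (E * h)) := by simp only [mul_assoc, hpushE]
      _ = s * (s * h) := by rw [c2']
      _ = s * s * h := by rw [← mul_assoc]
  have GW1 : (1 - E) * (s * s * h) = 0 := by
    calc (1 - E) * (s * s * h) = s * (s * ((1 - E) * h)) := by simp only [mul_assoc, hpushG]
      _ = 0 := by rw [c6', mul_zero, mul_zero]
  have FW1 : (s * (1 - E)) * (s * s * h) = 0 := by
    calc (s * (1 - E)) * (s * s * h) = s * ((1 - E) * (s * (s * h))) := by noncomm_ring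
      _ = s * (s * ((1 - E) * (s * h))) := by rw [hpushG]
      _ = s * (s * (s * ((1 - E) * h))) := by rw [hpushG]
      _ = 0 := by rw [c6', mul_zero, mul_zero, mul_zero]
  have hEGF : E * ((1 - E) - s * (1 - E)) = 0 := by
    rw [mul_sub, c15, c14, sub_zero]
  have hGFW1 : ((1 - E) - s * (1 - E)) * (s * s * h) = 0 := by
    rw [sub_mul, GW1, FW1, sub_zero]
  have hGFGF : ((1 - E) - s * (1 - E)) * ((1 - E) - s * (1 - E))
      = (1 - E) - s * (1 - E) := by
    calc ((1 - E) - s * (1 - E)) * ((1 - E) - s * (1 - E))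
        = (1 - E) * (1 - E) - (1 - E) * (s * (1 - E))
          - ((s * (1 - E)) * (1 - E) - (s * (1 - E)) * (s * (1 - E))) := by noncomm_ring
      _ = (1 - E) - s * (1 - E) - (s * (1 - E) - s * (1 - E)) := by rw [c9, c16', c16, c11]
      _ = (1 - E) - s * (1 - E) := by abel
  have hwstar : star (1 - s + t) = 1 - s + t := by
    rw [star_add, star_sub, star_one, hs, hts]
  have e1star : star (s * s * h) = s * s * h := by
    calc star (s * s * h) = star h * star (s * s) := by rw [star_mul]
      _ = h * (s * s) := by rw [hh, star_mul, hs]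
      _ = s * s * h := hss_h
  constructor
  · refine ⟨s * s * h + ((1 - E) - s * (1 - E)), ⟨?_, ?_, ?_⟩, ?_⟩
    · calc (1 - s + t) * (s * s * h + ((1 - E) - s * (1 - E))) * (1 - s + t)
          = (E + ((1 - E) - s * (1 - E))) * (1 - s + t) := by rw [wW]
        _ = E * (1 - s + t)
            + ((1 - E) * (1 - s + t) - (s * (1 - E)) * (1 - s + t)) := by noncomm_ring
        _ = ((1 - s + t) - ((1 - E) - s * (1 - E)))
            + (((1 - E) - s * (1 - E)) - 0) := by rw [Ew, gw, fw]
        _ = 1 - s + t := by abel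
    · calc (s * s * h + ((1 - E) - s * (1 - E))) * (1 - s + t)
            * (s * s * h + ((1 - E) - s * (1 - E)))
          = (E + ((1 - E) - s * (1 - E))) * (s * s * h + ((1 - E) - s * (1 - E))) := by
            rw [Ww]
        _ = E * (s * s * h) + E * ((1 - E) - s * (1 - E))
            + (((1 - E) - s * (1 - E)) * (s * s * h)
              + ((1 - E) - s * (1 - E)) * ((1 - E) - s * (1 - E))) := by noncomm_ring
        _ = s * s * h + 0 + (0 + ((1 - E) - s * (1 - E))) := by
            rw [EW1, hEGF, hGFW1, hGFGF]
        _ = s * s * h + ((1 - E) - s * (1 - E)) := by abel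
    · rw [wW, Ww]
    · rw [star_add, star_sub, e1star, hGs, hFs]
  · have s2S : s * s * ((1 - s + t) * h + s * (1 - E)) = E + s * (1 - E) := by
      calc s * s * ((1 - s + t) * h + s * (1 - E))
          = (s * s * (1 - s + t)) * h + s * (s * (s * (1 - E))) := by noncomm_ring
        _ = E + s * (1 - E) := by
            rw [P2, ← hE]
            congr 1
            rw [c8, c8]
    have Ss2 : ((1 - s + t) * h + s * (1 - E)) * (s * s) = E + s * (1 - E) := by
      calc ((1 - s + t) * h + s * (1 - E)) * (s * s)
          = (1 - s + t) * (h * (s * s)) + ((s * (1 - E)) * s) * s := by noncomm_ring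
        _ = (1 - s + t) * (s * s * h) + s * (1 - E) := by rw [hss_h, c10', c10']
        _ = ((1 - s + t) * (s * s)) * h + s * (1 - E) := by rw [← mul_assoc]
        _ = E + s * (1 - E) := by rw [P1, ← hE]
    have hGss : (1 - E) * (s * s) = s * (1 - E) := by
      calc (1 - E) * (s * s) = s * ((1 - E) * s) := hpushG _
        _ = s * (s * (1 - E)) := by rw [← c7]
        _ = s * (1 - E) := c8
    have hEss : E * (s * s) = s * s - s * (1 - E) := by
      have e1 : E * (s * s) + (1 - E) * (s * s) = s * s := by noncomm_ring
      rw [hGss] at e1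
      exact eq_sub_of_add_eq e1
    have hFss : (s * (1 - E)) * (s * s) = s * (1 - E) := by
      rw [← mul_assoc, c10', c10']
    refine ⟨(1 - s + t) * h + s * (1 - E), ⟨?_, ?_, ?_⟩, ?_⟩
    · calc s * s * ((1 - s + t) * h + s * (1 - E)) * (s * s)
          = (E + s * (1 - E)) * (s * s) := by rw [s2S]
        _ = E * (s * s) + (s * (1 - E)) * (s * s) := by rw [add_mul]
        _ = (s * s - s * (1 - E)) + s * (1 - E) := by rw [hEss, hFss]
        _ = s * s := by abel
    · calc ((1 - s + t) * h + s * (1 - E)) * (s * s) * ((1 - s + t) * h + s * (1 - E))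
          = ((1 - s + t) * h + s * (1 - E)) * (s * s * ((1 - s + t) * h + s * (1 - E))) := by
            rw [mul_assoc]
        _ = ((1 - s + t) * h + s * (1 - E)) * (E + s * (1 - E)) := by rw [s2S]
        _ = (1 - s + t) * (h * E) + (1 - s + t) * (h * (s * (1 - E)))
            + ((s * (1 - E)) * E + (s * (1 - E)) * (s * (1 - E))) := by noncomm_ring
        _ = (1 - s + t) * h + (1 - s + t) * 0 + (0 + s * (1 - E)) := by
            rw [c2, c13, c14', c11]
        _ = (1 - s + t) * h + s * (1 - E) := by rw [mul_zero]; abel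
    · rw [s2S, Ss2]
    · rw [star_add, star_mul, hh, hFs, hwstar, c17]
/-- product of commuting group invertible elements is group invertible -/
theorem grp_mul_comm {A B al be : R} (h1 : IsGrpInv A al) (h2 : IsGrpInv B be)
    (hAB : A * B = B * A) : IsGrpInv (A * B) (al * be) := by
  have halB : al * B = B * al := grp_commute h1 hAB
  have hbeA : be * A = A * be := grp_commute h2 hAB.symm
  have hbeal : be * al = al * be := grp_commute h2 halB.symm
  have p1 : al * A = A * al := h1.2.2.symm
  have p1' : ∀ y : R, al * (A * y) = A * (al * y) := liftr p1
  have p2 : B * A = A * B := hAB.symm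
  have p2' : ∀ y : R, B * (A * y) = A * (B * y) := liftr p2
  have p3' : ∀ y : R, be * (A * y) = A * (be * y) := liftr hbeA
  have p4 : B * al = al * B := halB.symm
  have p4' : ∀ y : R, B * (al * y) = al * (B * y) := liftr p4
  have p5' : ∀ y : R, be * (al * y) = al * (be * y) := liftr hbeal
  have p6 : be * B = B * be := h2.2.2.symm
  have p6' : ∀ y : R, be * (B * y) = B * (be * y) := liftr p6
  have KA : A * (al * A) = A := by
    calc A * (al * A) = A * al * A := by rw [← mul_assoc]
      _ = A := h1.1
  have KA0 : A * (A * al) = A := by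
    calc A * (A * al) = A * (al * A) := by rw [← p1]
      _ = A := KA
  have KA0' : ∀ y : R, A * (A * (al * y)) = A * y := fun y => by
    have := congrArg (· * y) KA0
    simpa only [mul_assoc] using this
  have KA2 : A * (al * al) = al := by
    calc A * (al * al) = al * A * al := by rw [← mul_assoc, ← p1]
      _ = al := h1.2.1
  have KA2' : ∀ y : R, A * (al * (al * y)) = al * y := fun y => by
    have := congrArg (· * y) KA2
    simpa only [mul_assoc] using this
  have KB0 : B * (B * be) = B := by
    calc B * (B * be) = B * (be * B) := by rw [← h2.2.2]
      _ = B * be * B := by rw [← mul_assoc]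
      _ = B := h2.1
  have KB0' : ∀ y : R, B * (B * (be * y)) = B * y := fun y => by
    have := congrArg (· * y) KB0
    simpa only [mul_assoc] using this
  have KB2 : B * (be * be) = be := by
    calc B * (be * be) = be * B * be := by rw [← mul_assoc, ← p6]
      _ = be := h2.2.1
  have KB2' : ∀ y : R, B * (be * (be * y)) = be * y := fun y => by
    have := congrArg (· * y) KB2
    simpa only [mul_assoc] using this
  refine ⟨?_, ?_, ?_⟩
  · simp only [mul_assoc, p1, p1', p2, p2', hbeA, p3', p4, p4', hbeal, p5', p6, p6',
      KA0, KA0', KA2, KA2', KB0, KB0', KB2, KB2']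
  · simp only [mul_assoc, p1, p1', p2, p2', hbeA, p3', p4, p4', hbeal, p5', p6, p6',
      KA0, KA0', KA2, KA2', KB0, KB0', KB2, KB2']
  · simp only [mul_assoc, p1, p1', p2, p2', hbeA, p3', p4, p4', hbeal, p5', p6, p6',
      KA0, KA0', KA2, KA2', KB0, KB0', KB2, KB2']

end Stmt16Aux

open Stmt16Aux in
theorem stmt_16 {R : Type*} [Ring R] [StarRing R] (hR : IsStarReducing R) (p q : R)
    (hp : IsProjection p) (hq : IsProjection q) :
    IsMPInvertible (p * q + q * p) ↔
      IsMPInvertible (p + q) ∧ IsMPInvertible (p * q) := by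
  obtain ⟨hp2, hps⟩ := hp
  obtain ⟨hq2, hqs⟩ := hq
  have hts : star (p * q + q * p) = p * q + q * p := by
    rw [star_add, star_mul, star_mul, hps, hqs, add_comm]
  have hsstar : star (p + q) = p + q := by rw [star_add, hps, hqs]
  have hT : p * q + q * p = (p + q) * (p + q) - (p + q) := by
    have e : (p + q) * (p + q) - (p + q) = p * p + p * q + (q * p + q * q) - (p + q) := by
      noncomm_ring
    rw [e, hp2, hq2]
    abel
  have eub : (1 - p) * (1 - q) * (1 - p) = 1 - p - q + p * q + q * p - p * q * p := by
    have e : (1 - p) * (1 - q) * (1 - p)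
        = 1 - p - q + p * q - p + p * p + q * p - p * q * p := by noncomm_ring
    rw [e, hp2]
    abel
  have hwid : 1 - (p + q) + ((p + q) * (p + q) - (p + q))
      = p * q * p + (1 - p) * (1 - q) * (1 - p) := by
    rw [← hT, eub]
    abel
  have hu_sa : star (p * q * p) = p * q * p := by
    rw [star_mul, star_mul, hps, hqs, ← mul_assoc]
  have hub_sa : star ((1 - p) * (1 - q) * (1 - p)) = (1 - p) * (1 - q) * (1 - p) := by
    rw [star_mul, star_mul, star_sub, star_sub, star_one, hps, hqs, ← mul_assoc]
  have hpp : p * (1 - p) = 0 := by rw [mul_sub, mul_one, hp2, sub_self]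
  have hpp' : (1 - p) * p = 0 := by rw [sub_mul, one_mul, hp2, sub_self]
  have horth1 : (p * q * p) * ((1 - p) * (1 - q) * (1 - p)) = 0 := by
    calc (p * q * p) * ((1 - p) * (1 - q) * (1 - p))
        = (p * q) * ((p * (1 - p)) * ((1 - q) * (1 - p))) := by noncomm_ring
      _ = 0 := by rw [hpp, zero_mul, mul_zero]
  have horth2 : ((1 - p) * (1 - q) * (1 - p)) * (p * q * p) = 0 := by
    calc ((1 - p) * (1 - q) * (1 - p)) * (p * q * p)
        = ((1 - p) * (1 - q)) * (((1 - p) * p) * (q * p)) := by noncomm_ring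
      _ = 0 := by rw [hpp', zero_mul, mul_zero]
  have haas : (p * q) * star (p * q) = p * q * p := by
    calc (p * q) * star (p * q) = (p * q) * (star q * star p) := by rw [star_mul]
      _ = (p * q) * (q * p) := by rw [hqs, hps]
      _ = p * (q * q) * p := by noncomm_ring
      _ = p * q * p := by rw [hq2]
  constructor
  · rintro ⟨c0, hc0⟩
    have hgrp : IsGrpInv ((p * q + q * p) * (p * q + q * p)) (c0 * c0) :=
      sa_mp_sq_grp hts hc0
    have hgrp' : IsGrpInv (((p + q) * (p + q) - (p + q)) * ((p + q) * (p + q) - (p + q)))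
        (c0 * c0) := by rw [← hT]; exact hgrp
    have hc0s : star (c0 * c0) = c0 * c0 := by
      have h1 := mp_sa hts hc0
      rw [star_mul, h1]
    obtain ⟨⟨W, hW, hWs⟩, ⟨S, hS, hSs⟩⟩ := split_lemma hR hsstar hc0s hgrp'
    constructor
    · exact ⟨(p + q) * S, sa_sq_grp_mp hR hsstar hS hSs⟩
    · have hW' : IsGrpInv (p * q * p + (1 - p) * (1 - q) * (1 - p)) W := by
        rw [← hwid]; exact hW
      obtain ⟨hk, hks⟩ := grp_summand hR hW' hWs hu_sa hub_sa horth1 horth2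
      have hk' : IsGrpInv ((p * q) * star (p * q)) ((p * q * p) * (W * W)) := by
        rw [haas]; exact hk
      exact ⟨star (p * q) * ((p * q * p) * (W * W)), grp_aas_to_mp hR hk' hks⟩
  · rintro ⟨⟨bs, hbs⟩, ⟨b0, hb0⟩⟩
    have hSgrp : IsGrpInv ((p + q) * (p + q)) (bs * bs) := sa_mp_sq_grp hsstar hbs
    have hbss : star bs = bs := mp_sa hsstar hbs
    have hbs2 : star (bs * bs) = bs * bs := by rw [star_mul, hbss]
    have hk0 : IsGrpInv ((p * q) * star (p * q)) (star b0 * b0) := mp_to_grp_aas hb0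
    have hk : IsGrpInv (p * q * p) (star b0 * b0) := by rw [← haas]; exact hk0
    have hks : star (star b0 * b0) = star b0 * b0 := by rw [star_mul, star_star]
    obtain ⟨kb, hkb, hkbs⟩ := ubar_grp hR hp2 hps hq2 hqs hk hks
    have hsum : IsGrpInv (p * q * p + (1 - p) * (1 - q) * (1 - p)) (star b0 * b0 + kb) :=
      grp_orth_sum hk hkb horth1 horth2
    have hsum' : IsGrpInv (1 - (p + q) + ((p + q) * (p + q) - (p + q)))
        (star b0 * b0 + kb) := by rw [hwid]; exact hsum
    have hAB : ((p + q) * (p + q)) * (1 - (p + q) + ((p + q) * (p + q) - (p + q)))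
        = (1 - (p + q) + ((p + q) * (p + q) - (p + q))) * ((p + q) * (p + q)) := by
      noncomm_ring
    have hprod : IsGrpInv (((p + q) * (p + q)) * (1 - (p + q) + ((p + q) * (p + q) - (p + q))))
        ((bs * bs) * (star b0 * b0 + kb)) := grp_mul_comm hSgrp hsum' hAB
    have hprod_eq : ((p + q) * (p + q)) * (1 - (p + q) + ((p + q) * (p + q) - (p + q)))
        = (p * q + q * p) * (p * q + q * p) := by
      rw [hT]; noncomm_ring
    have hgrpT : IsGrpInv ((p * q + q * p) * (p * q + q * p))
        ((bs * bs) * (star b0 * b0 + kb)) := by rw [← hprod_eq]; exact hprod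
    have hαB : (bs * bs) * (1 - (p + q) + ((p + q) * (p + q) - (p + q)))
        = (1 - (p + q) + ((p + q) * (p + q) - (p + q))) * (bs * bs) := by
      have e1 : (bs * bs) * ((p+q)*(p+q)) = ((p+q)*(p+q)) * (bs * bs) := by
        have e2 : bs * (p + q) = (p + q) * bs := (mp_comm hsstar hbs).symm
        have e2' : ∀ y : R, bs * ((p + q) * y) = (p + q) * (bs * y) := liftr e2
        simp only [mul_assoc, e2, e2']
      exact grp_commute hSgrp (by rw [hAB]) |>.symm ▸ (grp_commute hSgrp hAB)
    have hβα : (star b0 * b0 + kb) * (bs * bs) = (bs * bs) * (star b0 * b0 + kb) :=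
      grp_commute hsum' hαB.symm
    have hsa : star ((bs * bs) * (star b0 * b0 + kb)) = (bs * bs) * (star b0 * b0 + kb) := by
      calc star ((bs * bs) * (star b0 * b0 + kb))
          = star (star b0 * b0 + kb) * star (bs * bs) := by rw [star_mul]
        _ = (star b0 * b0 + kb) * (bs * bs) := by rw [star_add, hks, hkbs, hbs2]
        _ = (bs * bs) * (star b0 * b0 + kb) := hβα
    exact ⟨(p * q + q * p) * ((bs * bs) * (star b0 * b0 + kb)),
      sa_sq_grp_mp hR hts hgrpT hsa⟩
end
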